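/- arXiv:1805.03847 — 9 statements merged into one kernel-verified Lean document; each statement's English description precedes it below -/
import Mathlib

section
/- Let Γ ⊆ ℝⁿ be open and convex, S ⊆ Γ convex, f : Γ → ℝ differentiable and quasiconvex on Γ, and let S̄ = argmin{f(x) | x ∈ S} be nonempty. If x, y ∈ S̄ with ∇f(x) ≠ 0 and ∇f(y) ≠ 0, then for any d ∈ ℝⁿ, ⟨∇f(x), d⟩ < 0 implies ⟨∇f(y), d⟩ ≤ 0. -/
/-!
Since `x` and `y` both minimize `f` over the convex set `S`, `f x = f y` and the derivative of `f`
at `y` is nonnegative towards `x`. As `⟪∇f x, d⟫ < 0`, some point `u = x + t • d` of `Γ` with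
`t > 0` has `f u < f y`; quasiconvexity keeps `f ≤ f y` on the segment from `y` to `u`, so the
derivative at `y` is nonpositive towards `u`. As `u - y = (x - y) + t • d`, this forces
`t ⟪∇f y, d⟫ ≤ 0`.
-/

open Filter Set Topology

variable {E : Type*} [NormedAddCommGroup E] [NormedSpace ℝ E] {f : E → ℝ} {f' : StrongDual ℝ E}

theorem HasFDerivAt.map_sub_nonpos_of_le_on_segment {y u : E} (hf : HasFDerivAt f f' y)
    (h : ∀ z ∈ segment ℝ y u, f z ≤ f y) : f' (u - y) ≤ 0 :=
  (isMaxOn_iff.2 h).localize.hasFDerivWithinAt_nonpos hf.hasFDerivWithinAt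
    (sub_mem_posTangentConeAt_of_segment_subset subset_rfl)

theorem HasFDerivAt.map_sub_nonneg_of_isMinOn {s : Set E} {x y : E} (hf : HasFDerivAt f f' y)
    (hs : Convex ℝ s) (hmin : IsMinOn f s y) (hy : y ∈ s) (hx : x ∈ s) : 0 ≤ f' (x - y) :=
  hmin.localize.hasFDerivWithinAt_nonneg hf.hasFDerivWithinAt
    (sub_mem_posTangentConeAt_of_segment_subset (hs.segment_subset hy hx))

theorem HasFDerivAt.map_sub_nonpos_of_quasiconvex {s : Set E}
    (hqc : ∀ x ∈ s, ∀ y ∈ s, ∀ t ∈ Icc (0 : ℝ) 1, f (x + t • (y - x)) ≤ max (f x) (f y))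
    {y u : E} (hf : HasFDerivAt f f' y) (hy : y ∈ s) (hu : u ∈ s) (hle : f u ≤ f y) :
    f' (u - y) ≤ 0 := by
  refine hf.map_sub_nonpos_of_le_on_segment fun z hz => ?_
  rw [segment_eq_image'] at hz
  obtain ⟨t, ht, rfl⟩ := hz
  simpa [max_eq_left hle] using hqc y hy u hu t ht

theorem HasFDerivAt.exists_lt_of_map_neg {U : Set E} {x d : E} (hf : HasFDerivAt f f' x)
    (hd : f' d < 0) (hU : U ∈ 𝓝 x) : ∃ t > (0 : ℝ), x + t • d ∈ U ∧ f (x + t • d) < f x := by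
  by_contra! h
  have hmin : IsLocalMinOn f (segment ℝ x (x + d)) x := by
    filter_upwards [nhdsWithin_le_nhds hU, self_mem_nhdsWithin] with z hzU hz
    rw [segment_eq_image', add_sub_cancel_left] at hz
    obtain ⟨t, ht, rfl⟩ := hz
    rcases ht.1.eq_or_lt with rfl | ht0
    · simp
    · exact h t ht0 hzU
  have := hmin.hasFDerivWithinAt_nonneg hf.hasFDerivWithinAt
    (mem_posTangentConeAt_of_segment_subset subset_rfl)
  linarith

theorem stmt_3_general {n : ℕ} (Γ S : Set (EuclideanSpace ℝ (Fin n)))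
    (hΓo : IsOpen Γ) (hS : Convex ℝ S) (hSΓ : S ⊆ Γ)
    (f : EuclideanSpace ℝ (Fin n) → ℝ)
    (hdiff : ∀ z ∈ Γ, DifferentiableAt ℝ f z)
    (hqc : ∀ x ∈ Γ, ∀ y ∈ Γ, ∀ t ∈ Set.Icc (0:ℝ) 1,
        f (x + t • (y - x)) ≤ max (f x) (f y))
    (Sbar : Set (EuclideanSpace ℝ (Fin n)))
    (hSbar : Sbar = {x ∈ S | ∀ y ∈ S, f x ≤ f y})
    (x : EuclideanSpace ℝ (Fin n)) (hx : x ∈ Sbar)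
    (y : EuclideanSpace ℝ (Fin n)) (hy : y ∈ Sbar)
    (d : EuclideanSpace ℝ (Fin n))
    (hd : (inner ℝ (gradient f x) d : ℝ) < 0) :
    (inner ℝ (gradient f y) d : ℝ) ≤ 0 := by
  subst hSbar
  obtain ⟨hxS, hxmin⟩ := hx
  obtain ⟨hyS, hymin⟩ := hy
  have hfx := (hdiff x (hSΓ hxS)).hasFDerivAt
  have hfy := (hdiff y (hSΓ hyS)).hasFDerivAt
  rw [inner_gradient_left] at hd ⊢
  have hfxy : f x = f y := le_antisymm (hxmin y hyS) (hymin x hxS)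
  obtain ⟨t, ht, hu, hlt⟩ := hfx.exists_lt_of_map_neg hd (hΓo.mem_nhds (hSΓ hxS))
  have htoward_u := hfy.map_sub_nonpos_of_quasiconvex hqc (hSΓ hyS) hu (by linarith)
  have htoward_x := hfy.map_sub_nonneg_of_isMinOn hS (isMinOn_iff.2 hymin) hyS hxS
  rw [show x + t • d - y = (x - y) + t • d by abel, map_add, map_smul, smul_eq_mul] at htoward_u
  exact nonpos_of_mul_nonpos_right (by linarith) ht

theorem stmt_3 {n : ℕ} (Γ S : Set (EuclideanSpace ℝ (Fin n)))
    (hΓo : IsOpen Γ) (hΓ : Convex ℝ Γ) (hS : Convex ℝ S) (hSΓ : S ⊆ Γ)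
    (f : EuclideanSpace ℝ (Fin n) → ℝ)
    (hdiff : ∀ z ∈ Γ, DifferentiableAt ℝ f z)
    (hqc : ∀ x ∈ Γ, ∀ y ∈ Γ, ∀ t ∈ Set.Icc (0:ℝ) 1,
        f (x + t • (y - x)) ≤ max (f x) (f y))
    (Sbar : Set (EuclideanSpace ℝ (Fin n)))
    (hSbar : Sbar = {x ∈ S | ∀ y ∈ S, f x ≤ f y})
    (hne : Sbar.Nonempty)
    (x : EuclideanSpace ℝ (Fin n)) (hx : x ∈ Sbar)
    (y : EuclideanSpace ℝ (Fin n)) (hy : y ∈ Sbar)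
    (hgx : gradient f x ≠ 0) (hgy : gradient f y ≠ 0)
    (d : EuclideanSpace ℝ (Fin n))
    (hd : (inner ℝ (gradient f x) d : ℝ) < 0) :
    (inner ℝ (gradient f y) d : ℝ) ≤ 0 :=
  stmt_3_general Γ S hΓo hS hSΓ f hdiff hqc Sbar hSbar x hx y hy d hd
end

section
/- Let Γ ⊆ ℝⁿ be open and convex, S ⊆ Γ convex, f : Γ → ℝ Fréchet differentiable and quasiconvex, with nonempty solution set S̄ = argmin{f(x) | x ∈ S}. Then for any x, y ∈ S̄ with ∇f(x) ≠ 0 and ∇f(y) ≠ 0, the normalized gradients coincide: ∇f(x)/‖∇f(x)‖ = ∇f(y)/‖∇f(y)‖. -/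
/-!
Let `h = ∇f(y)`. First-order optimality of `y` on the convex set `S` gives `⟪h, x - y⟫ ≥ 0`,
while quasiconvexity makes `y` a maximum of `f` on the segment from `y` to any `z` with
`f z ≤ f y`, so `⟪h, z - y⟫ ≤ 0` there. If `⟪∇f(x), d⟫ < 0`, the points `z = x + t • d` with
small `t > 0` lie in `Γ` below the level `f x = f y`, whence `t ⟪h, d⟫ ≤ 0`. Thus the open
half-space on which `∇f(x)` is negative lies in the half-space on which `h` is nonpositive,
which forces `∇f(x)` and `h` onto the same ray.
-/

open Filter Topology Set
open scoped RealInnerProductSpace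

section Gradient

variable {E : Type*} [NormedAddCommGroup E] [InnerProductSpace ℝ E] [CompleteSpace E]
  {f : E → ℝ} {s : Set E} {x y : E}

theorem DifferentiableAt.eventually_lt_of_inner_gradient_neg (hf : DifferentiableAt ℝ f x)
    {d : E} (hd : ⟪gradient f x, d⟫ < 0) : ∀ᶠ t in 𝓝[>] (0 : ℝ), f (x + t • d) < f x := by
  rw [inner_gradient_left] at hd
  have hslope := (hf.hasFDerivAt.hasLineDerivAt d).tendsto_slope_zero.mono_left
    (nhdsGT_le_nhdsNE 0)
  filter_upwards [hslope.eventually_lt_const hd, self_mem_nhdsWithin] with t hslope ht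
  rw [smul_eq_mul] at hslope
  exact sub_neg.1 (neg_of_mul_neg_right hslope (inv_pos.2 ht).le)

theorem QuasiconvexOn.inner_gradient_sub_nonpos (hf : QuasiconvexOn ℝ s f) (hy : y ∈ s)
    {z : E} (hz : z ∈ s) (hzy : f z ≤ f y) (hfy : DifferentiableAt ℝ f y) :
    ⟪gradient f y, z - y⟫ ≤ 0 := by
  have hseg : segment ℝ y z ⊆ {w ∈ s | f w ≤ f y} :=
    (hf (f y)).segment_subset ⟨hy, le_rfl⟩ ⟨hz, hzy⟩
  have hmax : IsMaxOn f (segment ℝ y z) y := fun w hw => (hseg hw).2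
  rw [inner_gradient_left]
  exact hmax.localize.hasFDerivWithinAt_nonpos hfy.hasFDerivAt.hasFDerivWithinAt
    (sub_mem_posTangentConeAt_of_segment_subset subset_rfl)

theorem IsMinOn.inner_gradient_sub_nonneg (hmin : IsMinOn f s y) (hs : Convex ℝ s)
    (hy : y ∈ s) (hx : x ∈ s) (hfy : DifferentiableAt ℝ f y) :
    0 ≤ ⟪gradient f y, x - y⟫ := by
  rw [inner_gradient_left]
  exact hmin.localize.hasFDerivWithinAt_nonneg hfy.hasFDerivAt.hasFDerivWithinAt
    (sub_mem_posTangentConeAt_of_segment_subset (hs.segment_subset hy hx))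

theorem IsMinOn.inner_gradient_nonpos_of_inner_gradient_neg {Γ : Set E}
    (hf : QuasiconvexOn ℝ Γ f) (hΓ : IsOpen Γ) (hs : Convex ℝ s) (hsΓ : s ⊆ Γ)
    (hx : x ∈ s) (hy : y ∈ s) (hxmin : IsMinOn f s x) (hymin : IsMinOn f s y)
    (hfx : DifferentiableAt ℝ f x) (hfy : DifferentiableAt ℝ f y)
    {d : E} (hd : ⟪gradient f x, d⟫ < 0) : ⟪gradient f y, d⟫ ≤ 0 := by
  have hmemΓ : ∀ᶠ t in 𝓝[>] (0 : ℝ), x + t • d ∈ Γ :=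
    ((Continuous.tendsto' (by fun_prop) 0 x (by simp)).eventually
      (hΓ.mem_nhds (hsΓ hx))).filter_mono nhdsWithin_le_nhds
  obtain ⟨t, ⟨hlt, hzΓ⟩, ht⟩ :=
    ((hfx.eventually_lt_of_inner_gradient_neg hd).and hmemΓ).and self_mem_nhdsWithin |>.exists
  have hyx := hymin.inner_gradient_sub_nonneg hs hy hx hfy
  have hzy := hf.inner_gradient_sub_nonpos (hsΓ hy) hzΓ (hlt.le.trans (hxmin hy)) hfy
  rw [show x + t • d - y = (x - y) + t • d by abel, inner_add_right,
    real_inner_smul_right] at hzy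
  exact nonpos_of_mul_nonpos_right (by linarith) (ht : (0 : ℝ) < t)

end Gradient

theorem quasiconvexOn_of_le_max_add_smul_sub {E : Type*} [AddCommGroup E] [Module ℝ E]
    {s : Set E} {f : E → ℝ} (hs : Convex ℝ s)
    (h : ∀ x ∈ s, ∀ y ∈ s, ∀ t ∈ Icc (0 : ℝ) 1, f (x + t • (y - x)) ≤ max (f x) (f y)) :
    QuasiconvexOn ℝ s f := by
  refine quasiconvexOn_iff_le_max.2 ⟨hs, fun x hx y hy a b ha hb hab => ?_⟩
  have hcomb : a • x + b • y = x + b • (y - x) := by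
    obtain rfl : a = 1 - b := by linarith
    module
  rw [hcomb]
  exact h x hx y hy b ⟨hb, by linarith⟩

theorem sameRay_of_forall_inner_neg_imp_inner_nonpos {E : Type*} [NormedAddCommGroup E]
    [InnerProductSpace ℝ E] {g h : E} (hg : g ≠ 0) (H : ∀ d, ⟪g, d⟫ < 0 → ⟪h, d⟫ ≤ 0) :
    SameRay ℝ g h := by
  have hgpos : 0 < ‖g‖ := norm_pos_iff.2 hg
  have heq : ⟪g, h⟫ = ‖g‖ * ‖h‖ := by
    refine le_antisymm (real_inner_le_norm g h) (not_lt.1 fun hlt => ?_)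
    -- otherwise `‖g‖ • h - ‖h‖ • g` is a descent direction for `g` but not for `h`
    have hd := H (‖g‖ • h - ‖h‖ • g) (by
      rw [inner_sub_right, real_inner_smul_right, real_inner_smul_right,
        real_inner_self_eq_norm_sq]
      nlinarith)
    rw [inner_sub_right, real_inner_smul_right, real_inner_smul_right,
      real_inner_self_eq_norm_sq, real_inner_comm] at hd
    have hh : ‖h‖ = 0 := by nlinarith [norm_nonneg h]
    simp [norm_eq_zero.1 hh] at hlt
  exact sameRay_iff_norm_smul_eq.2 (inner_eq_norm_mul_iff_real.1 heq).symm

theorem stmt_4_general {n : ℕ} (Γ S : Set (EuclideanSpace ℝ (Fin n)))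
    (hΓo : IsOpen Γ) (hΓ : Convex ℝ Γ) (hS : Convex ℝ S) (hSΓ : S ⊆ Γ)
    (f : EuclideanSpace ℝ (Fin n) → ℝ)
    (hdiff : ∀ z ∈ Γ, DifferentiableAt ℝ f z)
    (hqc : ∀ x ∈ Γ, ∀ y ∈ Γ, ∀ t ∈ Set.Icc (0:ℝ) 1,
        f (x + t • (y - x)) ≤ max (f x) (f y))
    (Sbar : Set (EuclideanSpace ℝ (Fin n)))
    (hSbar : Sbar = {x ∈ S | ∀ y ∈ S, f x ≤ f y})
    (x : EuclideanSpace ℝ (Fin n)) (hx : x ∈ Sbar)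
    (y : EuclideanSpace ℝ (Fin n)) (hy : y ∈ Sbar)
    (hgx : gradient f x ≠ 0) (hgy : gradient f y ≠ 0) :
    ‖gradient f x‖⁻¹ • gradient f x = ‖gradient f y‖⁻¹ • gradient f y := by
  subst hSbar
  obtain ⟨hxS, hxmin⟩ := hx
  obtain ⟨hyS, hymin⟩ := hy
  have hf := quasiconvexOn_of_le_max_add_smul_sub hΓ hqc
  refine (sameRay_iff_inv_norm_smul_eq_of_ne hgx hgy).1 <|
    sameRay_of_forall_inner_neg_imp_inner_nonpos hgx fun d hd => ?_
  exact IsMinOn.inner_gradient_nonpos_of_inner_gradient_neg hf hΓo hS hSΓ hxS hyS hxmin hymin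
    (hdiff x (hSΓ hxS)) (hdiff y (hSΓ hyS)) hd

theorem stmt_4 {n : ℕ} (Γ S : Set (EuclideanSpace ℝ (Fin n)))
    (hΓo : IsOpen Γ) (hΓ : Convex ℝ Γ) (hS : Convex ℝ S) (hSΓ : S ⊆ Γ)
    (f : EuclideanSpace ℝ (Fin n) → ℝ)
    (hdiff : ∀ z ∈ Γ, DifferentiableAt ℝ f z)
    (hqc : ∀ x ∈ Γ, ∀ y ∈ Γ, ∀ t ∈ Set.Icc (0:ℝ) 1,
        f (x + t • (y - x)) ≤ max (f x) (f y))
    (Sbar : Set (EuclideanSpace ℝ (Fin n)))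
    (hSbar : Sbar = {x ∈ S | ∀ y ∈ S, f x ≤ f y})
    (hne : Sbar.Nonempty)
    (x : EuclideanSpace ℝ (Fin n)) (hx : x ∈ Sbar)
    (y : EuclideanSpace ℝ (Fin n)) (hy : y ∈ Sbar)
    (hgx : gradient f x ≠ 0) (hgy : gradient f y ≠ 0) :
    ‖gradient f x‖⁻¹ • gradient f x = ‖gradient f y‖⁻¹ • gradient f y :=
  stmt_4_general Γ S hΓo hΓ hS hSΓ f hdiff hqc Sbar hSbar x hx y hy hgx hgy
end

section
/- Let Γ ⊆ ℝⁿ be open and convex, S ⊆ Γ convex, f : Γ → ℝ continuously differentiable and quasiconvex, with nonempty solution set S̄ = argmin{f(x) | x ∈ S}. Then exactly one of the following holds: (I) ∇f(x) ≠ 0 for all x ∈ S̄ and the normalized gradient ∇f(x)/‖∇f(x)‖ is constant on S̄; (II) ∇f(x) = 0 for all x ∈ S̄. -/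
/-!
Let `a, b` minimize `f` over `S`. Quasiconvexity makes the sublevel set `{f ≤ f a}` convex, so
`∇f(a)·(z - a) ≤ 0` whenever `f z ≤ f a`, while minimality over the convex set `S` gives
`∇f(b)·(a - b) ≥ 0`. Moving from `a` in a direction `w` with `∇f(a)·w < 0` produces points of the
sublevel set, hence `∇f(b)·w ≤ 0`: every open halfspace `{∇f(a)·w < 0}` lies in `{∇f(b)·w ≤ 0}`,
which forces `∇f(b)` to be a nonnegative multiple of `∇f(a)`.

It remains to rule out `∇f(a) ≠ 0 = ∇f(b)`. Since `f` is `C¹`, it grows at a uniform linear rate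
in the direction `∇f(a)` near `a`, in particular near the points `a + t (b - a)` where `f ≥ f a`.
Quasiconvexity on the segment from `a` to `b + s ∇f(a)` transports this growth to `b`, giving
`f (b + s ∇f(a)) ≥ f b + c s` for some `c > 0`, so `∇f(b) ≠ 0`.
-/

open Set Filter
open scoped RealInnerProductSpace Topology

section NormedSpace

variable {E : Type*} [NormedAddCommGroup E] [NormedSpace ℝ E] {f : E → ℝ} {s : Set E} {a b z w : E}

lemma quasiconvexOn_iff_le_max_add_smul_sub :
    QuasiconvexOn ℝ s f ↔ Convex ℝ s ∧
      ∀ x ∈ s, ∀ y ∈ s, ∀ t ∈ Icc (0:ℝ) 1, f (x + t • (y - x)) ≤ max (f x) (f y) := by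
  have hcomb : ∀ (x y : E) (t : ℝ), (1 - t) • x + t • y = x + t • (y - x) := fun x y t => by
    module
  rw [quasiconvexOn_iff_le_max]
  refine and_congr_right fun _ => ⟨fun h x hx y hy t ht => ?_, fun h x hx y hy p q hp hq hpq => ?_⟩
  · simpa only [hcomb] using h hx hy (sub_nonneg.2 ht.2) ht.1 (sub_add_cancel 1 t)
  · obtain rfl : p = 1 - q := by linarith
    simpa only [hcomb] using h x hx y hy q ⟨hq, by linarith⟩

lemma QuasiconvexOn.hasFDerivAt_sub_nonpos {f' : E →L[ℝ] ℝ} (hf : QuasiconvexOn ℝ s f)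
    (ha : a ∈ s) (hz : z ∈ s) (hza : f z ≤ f a) (hfa : HasFDerivAt f f' a) :
    f' (z - a) ≤ 0 := by
  have hmax : IsMaxOn f {x ∈ s | f x ≤ f a} a := fun _ hx => hx.2
  exact hmax.localize.hasFDerivWithinAt_nonpos hfa.hasFDerivWithinAt
    (sub_mem_posTangentConeAt_of_segment_subset
      ((hf (f a)).segment_subset ⟨ha, le_rfl⟩ ⟨hz, hza⟩))

lemma IsMinOn.hasFDerivAt_sub_nonneg {f' : E →L[ℝ] ℝ} (hf : IsMinOn f s a) (hs : Convex ℝ s)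
    (ha : a ∈ s) (hb : b ∈ s) (hfa : HasFDerivAt f f' a) : 0 ≤ f' (b - a) :=
  hf.localize.hasFDerivWithinAt_nonneg hfa.hasFDerivWithinAt
    (sub_mem_posTangentConeAt_of_segment_subset (hs.segment_subset ha hb))

lemma IsOpen.eventually_add_smul_mem (hs : IsOpen s) (ha : a ∈ s) (w : E) :
    ∀ᶠ t in 𝓝[>] (0:ℝ), a + t • w ∈ s :=
  nhdsWithin_le_nhds (ContinuousAt.preimage_mem_nhds (by fun_prop) (by simpa using hs.mem_nhds ha))

lemma HasLineDerivAt.eventually_lt_add_mul {d c : ℝ} (hf : HasLineDerivAt ℝ f d a w)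
    (hdc : d < c) : ∀ᶠ t in 𝓝[>] (0:ℝ), f (a + t • w) < f a + c * t := by
  filter_upwards [hf.tendsto_slope_zero_right (Iio_mem_nhds hdc), self_mem_nhdsWithin]
    with t hslope ht
  rw [mem_preimage, mem_Iio, smul_eq_mul, inv_mul_lt_iff₀ ht] at hslope
  linarith

lemma QuasiconvexOn.hasFDerivAt_nonpos_of_neg {f'a f'b : E →L[ℝ] ℝ} (hf : QuasiconvexOn ℝ s f)
    (hs : IsOpen s) (ha : a ∈ s) (hb : b ∈ s) (hab : f a ≤ f b) (hfa : HasFDerivAt f f'a a)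
    (hfb : HasFDerivAt f f'b b) (hba : 0 ≤ f'b (a - b)) (hw : f'a w < 0) : f'b w ≤ 0 := by
  obtain ⟨t, ⟨hts, hlt⟩, ht⟩ := (((hs.eventually_add_smul_mem ha w).and
    ((hfa.hasLineDerivAt w).eventually_lt_add_mul hw)).and self_mem_nhdsWithin).exists
  have hdesc := hf.hasFDerivAt_sub_nonpos hb hts (by linarith) hfb
  rw [show a + t • w - b = (a - b) + t • w by abel, map_add, map_smul, smul_eq_mul] at hdesc
  have ht : (0:ℝ) < t := ht
  nlinarith

lemma HasStrictFDerivAt.exists_isOpen_add_smul_ge {f' : E →L[ℝ] ℝ} {e : E}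
    (hf : HasStrictFDerivAt f f' a) (he : 0 < f' e) :
    ∃ U, IsOpen U ∧ a ∈ U ∧
      ∀ x ∈ U, ∀ r : ℝ, 0 ≤ r → x + r • e ∈ U → f x + f' e / 2 * r ≤ f (x + r • e) := by
  have he0 : 0 < ‖e‖ := norm_pos_iff.2 fun h => by simp [h] at he
  have hsmall := (hasStrictFDerivAt_iff_isLittleO.1 hf).def (c := f' e / (2 * ‖e‖)) (by positivity)
  rw [nhds_prod_eq, eventually_prod_self_iff'] at hsmall
  obtain ⟨V, hV, hVbound⟩ := hsmall
  obtain ⟨U, hUV, hUo, haU⟩ := mem_nhds_iff.1 hV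
  refine ⟨U, hUo, haU, fun x hx r hr hxr => ?_⟩
  have hbound := hVbound _ (hUV hxr) _ (hUV hx)
  rw [add_sub_cancel_left, map_smul, smul_eq_mul, norm_smul, Real.norm_of_nonneg hr,
    Real.norm_eq_abs] at hbound
  have hlin : f' e / (2 * ‖e‖) * (r * ‖e‖) = f' e / 2 * r := by field_simp
  linarith [neg_abs_le (f (x + r • e) - f x - r * f' e)]

lemma QuasiconvexOn.hasFDerivAt_pos_of_hasStrictFDerivAt_pos {f'a f'b : E →L[ℝ] ℝ} {e : E}
    (hf : QuasiconvexOn ℝ s f) (hs : IsOpen s) (ha : a ∈ s) (hb : b ∈ s) (hba : f b ≤ f a)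
    (hseg : ∀ t ∈ Icc (0:ℝ) 1, f a ≤ f (a + t • (b - a)))
    (hfa : HasStrictFDerivAt f f'a a) (hfb : HasFDerivAt f f'b b) (he : 0 < f'a e) :
    0 < f'b e := by
  obtain ⟨U, hUo, haU, hgrowU⟩ := hfa.exists_isOpen_add_smul_ge he
  obtain ⟨t, ⟨htU, ht1⟩, ht0⟩ := (((hUo.eventually_add_smul_mem haU (b - a)).and
    (nhdsWithin_le_nhds (eventually_le_nhds one_pos))).and self_mem_nhdsWithin).exists
  have ht0 : (0:ℝ) < t := ht0
  set x := a + t • (b - a)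
  have hgrow : ∀ᶠ r in 𝓝[>] (0:ℝ), f b + t * (f'a e / 2) * r ≤ f (b + r • e) := by
    filter_upwards [hs.eventually_add_smul_mem hb e, hUo.eventually_add_smul_mem htU (t • e),
      self_mem_nhdsWithin] with r hbr hxr hr
    have hr : (0:ℝ) < r := hr
    rw [smul_smul, mul_comm] at hxr
    have hlin := hgrowU x htU (t * r) (by positivity) hxr
    have hq : a + t • (b + r • e - a) = x + (t * r) • e := by module
    have hmax := (quasiconvexOn_iff_le_max_add_smul_sub.1 hf).2 a ha _ hbr t ⟨ht0.le, ht1⟩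
    rw [hq] at hmax
    have hxa := hseg t ⟨ht0.le, ht1⟩
    have hpos : 0 < f'a e / 2 * (t * r) := by positivity
    rcases le_max_iff.1 hmax with h | h <;> nlinarith
  by_contra hneg
  obtain ⟨r, hge, hlt⟩ := (hgrow.and ((hfb.hasLineDerivAt e).eventually_lt_add_mul
    (show f'b e < t * (f'a e / 2) by push Not at hneg; nlinarith))).exists
  linarith

end NormedSpace

section InnerProductSpace

variable {F : Type*} [NormedAddCommGroup F] [InnerProductSpace ℝ F]

lemma sameRay_of_inner_neg_imp_inner_nonpos {u v : F} (hu : u ≠ 0)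
    (h : ∀ w, ⟪u, w⟫ < 0 → ⟪v, w⟫ ≤ 0) : SameRay ℝ u v := by
  have huu : 0 < ⟪u, u⟫ := real_inner_self_pos.2 hu
  have horth : ∀ w, ⟪u, w⟫ = 0 → ⟪v, w⟫ ≤ 0 := by
    intro w hw
    have hlim : Tendsto (fun ε : ℝ => ε * ⟪v, u⟫) (𝓝[>] 0) (𝓝 0) :=
      tendsto_nhdsWithin_of_tendsto_nhds (by simpa using (continuous_mul_const ⟪v, u⟫).tendsto 0)
    refine ge_of_tendsto hlim ?_
    filter_upwards [self_mem_nhdsWithin] with ε hε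
    have hε : (0:ℝ) < ε := hε
    have := h (w - ε • u) (by rw [inner_sub_right, real_inner_smul_right, hw]; nlinarith)
    rw [inner_sub_right, real_inner_smul_right] at this
    linarith
  set c := ⟪u, v⟫ / ⟪u, u⟫
  have hw : ⟪u, v - c • u⟫ = 0 := by
    rw [inner_sub_right, real_inner_smul_right, div_mul_cancel₀ _ huu.ne', sub_self]
  have hvw : ⟪v, v - c • u⟫ = 0 := by
    have hneg := horth (-(v - c • u)) (by rw [inner_neg_right, hw, neg_zero])
    rw [inner_neg_right] at hneg
    linarith [horth _ hw]
  have hv : v = c • u := by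
    rw [← sub_eq_zero, ← inner_self_eq_zero (𝕜 := ℝ), inner_sub_left, real_inner_smul_left, hvw,
      hw, mul_zero, sub_zero]
  have hc : 0 ≤ c := by
    have := h (-u) (by rw [inner_neg_right]; linarith)
    rw [inner_neg_right, real_inner_comm] at this
    exact div_nonneg (by linarith) huu.le
  exact hv ▸ SameRay.sameRay_nonneg_smul_right u hc

theorem gradient_ne_zero_and_sameRay_of_isMinOn [CompleteSpace F] {f : F → ℝ} {Γ S : Set F}
    {a b : F} (hΓ : IsOpen Γ) (hf : QuasiconvexOn ℝ Γ f) (hC1 : ContDiffOn ℝ 1 f Γ)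
    (hS : Convex ℝ S) (hSΓ : S ⊆ Γ) (ha : a ∈ S) (hb : b ∈ S) (hfa : IsMinOn f S a)
    (hfb : IsMinOn f S b) (hu : gradient f a ≠ 0) :
    gradient f b ≠ 0 ∧ SameRay ℝ (gradient f a) (gradient f b) := by
  have hstrict : ∀ x ∈ S, HasStrictFDerivAt f (fderiv ℝ f x) x := fun x hx =>
    (hC1.contDiffAt (hΓ.mem_nhds (hSΓ hx))).hasStrictFDerivAt one_ne_zero
  have hab : f a = f b := le_antisymm (hfa hb) (hfb ha)
  constructor
  · have hpos := hf.hasFDerivAt_pos_of_hasStrictFDerivAt_pos hΓ (hSΓ ha) (hSΓ hb) hab.ge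
      (fun t ht => hfa (hS.add_smul_sub_mem ha hb ht)) (hstrict a ha)
      (hstrict b hb).hasFDerivAt (e := gradient f a)
      (by rw [← inner_gradient_left]; exact real_inner_self_pos.2 hu)
    rw [← inner_gradient_left] at hpos
    intro hzero
    simp [hzero] at hpos
  · refine sameRay_of_inner_neg_imp_inner_nonpos hu fun w hw => ?_
    rw [inner_gradient_left] at hw ⊢
    have hfb' := (hstrict b hb).hasFDerivAt
    exact hf.hasFDerivAt_nonpos_of_neg hΓ (hSΓ ha) (hSΓ hb) hab.le (hstrict a ha).hasFDerivAt
      hfb' (hfb.hasFDerivAt_sub_nonneg hS hb ha hfb') hw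

end InnerProductSpace

theorem stmt_5 {n : ℕ} (Γ S : Set (EuclideanSpace ℝ (Fin n)))
    (hΓo : IsOpen Γ) (hΓ : Convex ℝ Γ) (hS : Convex ℝ S) (hSΓ : S ⊆ Γ)
    (f : EuclideanSpace ℝ (Fin n) → ℝ)
    (hC1 : ContDiffOn ℝ 1 f Γ)
    (hqc : ∀ x ∈ Γ, ∀ y ∈ Γ, ∀ t ∈ Set.Icc (0:ℝ) 1,
        f (x + t • (y - x)) ≤ max (f x) (f y))
    (Sbar : Set (EuclideanSpace ℝ (Fin n)))
    (hSbar : Sbar = {x ∈ S | ∀ y ∈ S, f x ≤ f y})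
    (hne : Sbar.Nonempty) :
    Xor'
      ((∀ x ∈ Sbar, gradient f x ≠ 0) ∧
        (∀ x ∈ Sbar, ∀ y ∈ Sbar,
          ‖gradient f x‖⁻¹ • gradient f x = ‖gradient f y‖⁻¹ • gradient f y))
      (∀ x ∈ Sbar, gradient f x = 0) := by
  have hf : QuasiconvexOn ℝ Γ f := quasiconvexOn_iff_le_max_add_smul_sub.2 ⟨hΓ, hqc⟩
  have hmin : ∀ x ∈ Sbar, x ∈ S ∧ IsMinOn f S x := by
    subst hSbar
    exact fun x hx => ⟨hx.1, hx.2⟩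
  have key : ∀ x ∈ Sbar, ∀ y ∈ Sbar, gradient f x ≠ 0 →
      gradient f y ≠ 0 ∧ SameRay ℝ (gradient f x) (gradient f y) := fun x hx y hy =>
    gradient_ne_zero_and_sameRay_of_isMinOn hΓo hf hC1 hS hSΓ (hmin x hx).1 (hmin y hy).1
      (hmin x hx).2 (hmin y hy).2
  by_cases hzero : ∀ x ∈ Sbar, gradient f x = 0
  · obtain ⟨x, hx⟩ := hne
    exact Or.inr ⟨hzero, fun h => h.1 x hx (hzero x hx)⟩
  · push Not at hzero
    obtain ⟨x₀, hx₀, hgrad₀⟩ := hzero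
    have hall : ∀ x ∈ Sbar, gradient f x ≠ 0 := fun x hx => (key x₀ hx₀ x hx hgrad₀).1
    refine Or.inl ⟨⟨hall, fun x hx y hy => ?_⟩, fun h => hgrad₀ (h x₀ hx₀)⟩
    exact (key x hx y hy (hall x hx)).2.inv_norm_smul_eq (hall x hx) (hall y hy)
end

section
/- Let Γ ⊆ ℝⁿ be open and convex, S ⊆ Γ convex, f : Γ → ℝ continuously differentiable and quasiconvex. Let x̄ be a global minimizer of f on S with ∇f(x̄) ≠ 0. Then the solution set S̄ equals the set Ŝ₁ = {x ∈ S | ⟨∇f(x̄), x − x̄⟩ = 0, ∇f(x) ≠ 0, and ∇f(x)/‖∇f(x)‖ = ∇f(x̄)/‖∇f(x̄)‖}. -/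
/-! For a differentiable quasiconvex `f`, `f y ≤ f x` forces `⟪∇f x, y - x⟫ ≤ 0`, so every point
strictly beyond the hyperplane through `x̄` orthogonal to `∇f x̄` has a value above `f x̄`.
A second minimizer `x` lies on that hyperplane (the reverse inequality comes from minimality of `x̄`
along the segment to `x`), hence every `d` with `⟪∇f x̄, d⟫ > 0` is an ascent direction at `x` and
`∇f x` is a nonnegative multiple of `∇f x̄`. It is nonzero: by continuity of `∇f`, some point `u`
of the segment `[x̄, x]` has `⟪∇f u, ∇f x̄⟫ > 0`, and quasiconvexity along the segments from `x̄`
to `x + t ∇f x̄` bounds this slope at `u` by the slope of `f` at `x`.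
Conversely, if `∇f x` points along `∇f x̄` and `x` lies on the hyperplane, then
`f x < f (x̄ + t ∇f x̄)` for all small `t > 0`, and `f x ≤ f x̄` in the limit. -/

open Filter Topology InnerProductSpace RealInnerProductSpace
open scoped Gradient

theorem quasiconvexOn_of_le_max {E : Type*} [AddCommGroup E] [Module ℝ E] {s : Set E}
    {f : E → ℝ} (hs : Convex ℝ s)
    (hf : ∀ x ∈ s, ∀ y ∈ s, ∀ t ∈ Set.Icc (0 : ℝ) 1, f (x + t • (y - x)) ≤ max (f x) (f y)) :
    QuasiconvexOn ℝ s f := by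
  refine (quasiconvexOn_iff_le_max (𝕜 := ℝ)).2 ⟨hs, fun x hx y hy a b ha hb hab => ?_⟩
  obtain rfl : a = 1 - b := by linarith
  rw [show (1 - b) • x + b • y = x + b • (y - x) by module]
  exact hf x hx y hy b ⟨hb, by linarith⟩

theorem le_of_hasDerivAt_of_eventually_le {h₁ h₂ : ℝ → ℝ} {d₁ d₂ x : ℝ}
    (hd₁ : HasDerivAt h₁ d₁ x) (hd₂ : HasDerivAt h₂ d₂ x) (hx : h₁ x = h₂ x)
    (hle : ∀ᶠ t in 𝓝[>] x, h₁ t ≤ h₂ t) : d₁ ≤ d₂ := by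
  refine le_of_tendsto_of_tendsto (hd₁.tendsto_slope.mono_left (nhdsGT_le_nhdsNE x))
    (hd₂.tendsto_slope.mono_left (nhdsGT_le_nhdsNE x)) ?_
  filter_upwards [hle, self_mem_nhdsWithin] with t ht (hxt : x < t)
  rw [slope_def_field, slope_def_field, hx]
  gcongr

theorem sameRay_of_forall_inner_nonneg {E : Type*} [NormedAddCommGroup E]
    [InnerProductSpace ℝ E] {v G : E} (hG : G ≠ 0) (h : ∀ d, 0 < ⟪G, d⟫ → 0 ≤ ⟪v, d⟫) :
    SameRay ℝ v G := by
  have hGG : 0 < ⟪G, G⟫ := real_inner_self_pos.2 hG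
  have hclosed : ∀ d, 0 ≤ ⟪G, d⟫ → 0 ≤ ⟪v, d⟫ := fun d hd => by
    have hlim : Tendsto (fun ε : ℝ => ⟪v, d + ε • G⟫) (𝓝[>] 0) (𝓝 ⟪v, d⟫) :=
      ((by fun_prop : Continuous fun ε : ℝ => ⟪v, d + ε • G⟫).tendsto' 0 _
        (by simp)).mono_left nhdsWithin_le_nhds
    refine ge_of_tendsto hlim ?_
    filter_upwards [self_mem_nhdsWithin] with ε (hε : 0 < ε)
    refine h _ ?_
    rw [inner_add_right, real_inner_smul_right]
    exact add_pos_of_nonneg_of_pos hd (mul_pos hε hGG)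
  have hspan : v ∈ ℝ ∙ G := by
    rw [← Submodule.orthogonal_orthogonal (ℝ ∙ G), Submodule.mem_orthogonal]
    intro w hw
    rw [Submodule.mem_orthogonal_singleton_iff_inner_right] at hw
    have h₁ := hclosed w hw.ge
    have h₂ := hclosed (-w) (by rw [inner_neg_right, hw, neg_zero])
    rw [inner_neg_right] at h₂
    rw [real_inner_comm]
    linarith
  obtain ⟨r, rfl⟩ := Submodule.mem_span_singleton.1 hspan
  have hr : 0 ≤ r := by
    have := h G hGG
    rw [real_inner_smul_left] at this
    exact nonneg_of_mul_nonneg_left this hGG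
  exact SameRay.sameRay_nonneg_smul_left G hr

variable {E : Type*} [NormedAddCommGroup E] [InnerProductSpace ℝ E] [CompleteSpace E]
  {f : E → ℝ} {s : Set E} {x y : E}

theorem DifferentiableAt.hasLineDerivAt_inner_gradient (hf : DifferentiableAt ℝ f x) (v : E) :
    HasLineDerivAt ℝ f ⟪∇ f x, v⟫ x v :=
  hf.hasGradientAt.hasFDerivAt.hasLineDerivAt v

theorem inner_gradient_le_of_eventually_le {v w : E} (hx : DifferentiableAt ℝ f x)
    (hy : DifferentiableAt ℝ f y) (hxy : f x = f y)
    (hle : ∀ᶠ t in 𝓝[>] (0 : ℝ), f (x + t • v) ≤ f (y + t • w)) :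
    ⟪∇ f x, v⟫ ≤ ⟪∇ f y, w⟫ :=
  le_of_hasDerivAt_of_eventually_le (hx.hasLineDerivAt_inner_gradient v)
    (hy.hasLineDerivAt_inner_gradient w) (by simpa using hxy) hle

theorem ContDiffOn.continuousAt_gradient (hf : ContDiffOn ℝ 1 f s) (hs : IsOpen s) (hx : x ∈ s) :
    ContinuousAt (∇ f) x :=
  ((toDual ℝ E).symm.continuous.comp_continuousOn
    (hf.continuousOn_fderiv_of_isOpen hs le_rfl)).continuousAt (hs.mem_nhds hx)

theorem IsMinOn.inner_gradient_nonneg (hmin : IsMinOn f s x) (hs : Convex ℝ s) (hx : x ∈ s)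
    (hy : y ∈ s) (hfx : DifferentiableAt ℝ f x) : 0 ≤ ⟪∇ f x, y - x⟫ := by
  have := inner_gradient_le_of_eventually_le (v := 0) hfx hfx rfl <| by
    filter_upwards [Ioc_mem_nhdsGT (zero_lt_one (α := ℝ))] with t ht
    simpa using hmin (hs.add_smul_sub_mem hx hy ⟨ht.1.le, ht.2⟩)
  rwa [inner_zero_right] at this

theorem QuasiconvexOn.inner_gradient_nonpos (hf : QuasiconvexOn ℝ s f) (hx : x ∈ s)
    (hy : y ∈ s) (hfx : DifferentiableAt ℝ f x) (hxy : f y ≤ f x) : ⟪∇ f x, y - x⟫ ≤ 0 := by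
  have := inner_gradient_le_of_eventually_le (w := 0) hfx hfx rfl <| by
    filter_upwards [Ioc_mem_nhdsGT (zero_lt_one (α := ℝ))] with t ht
    simpa using ((hf (f x)).add_smul_sub_mem ⟨hx, le_rfl⟩ ⟨hy, hxy⟩ ⟨ht.1.le, ht.2⟩).2
  rwa [inner_zero_right] at this

theorem QuasiconvexOn.lt_of_inner_gradient_pos (hf : QuasiconvexOn ℝ s f) (hx : x ∈ s)
    (hy : y ∈ s) (hfx : DifferentiableAt ℝ f x) (hxy : 0 < ⟪∇ f x, y - x⟫) : f x < f y :=
  not_le.1 fun h => hxy.not_ge (hf.inner_gradient_nonpos hx hy hfx h)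

theorem QuasiconvexOn.eventually_lt_add_smul (hf : QuasiconvexOn ℝ s f) (hs : IsOpen s)
    (hx : x ∈ s) (hy : y ∈ s) (hfx : DifferentiableAt ℝ f x) (hxy : 0 ≤ ⟪∇ f x, y - x⟫)
    {v : E} (hv : 0 < ⟪∇ f x, v⟫) :
    ∀ᶠ t in 𝓝[>] (0 : ℝ), y + t • v ∈ s ∧ f x < f (y + t • v) := by
  have hline : Tendsto (fun t : ℝ => y + t • v) (𝓝 0) (𝓝 y) :=
    (by fun_prop : Continuous fun t : ℝ => y + t • v).tendsto' 0 y (by simp)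
  filter_upwards [(hline.eventually (hs.eventually_mem hy)).filter_mono nhdsWithin_le_nhds,
    self_mem_nhdsWithin] with t hts (ht : 0 < t)
  refine ⟨hts, hf.lt_of_inner_gradient_pos hx hts hfx ?_⟩
  rw [add_sub_right_comm, inner_add_right, real_inner_smul_right]
  exact add_pos_of_nonneg_of_pos hxy (mul_pos ht hv)

theorem QuasiconvexOn.le_of_inner_gradient_nonneg (hf : QuasiconvexOn ℝ s f) (hs : IsOpen s)
    (hx : x ∈ s) (hy : y ∈ s) (hfx : DifferentiableAt ℝ f x) (hfy : ContinuousAt f y)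
    (hg : ∇ f x ≠ 0) (hxy : 0 ≤ ⟪∇ f x, y - x⟫) : f x ≤ f y := by
  have hlim : Tendsto (fun t : ℝ => f (y + t • ∇ f x)) (𝓝[>] 0) (𝓝 (f y)) := by
    refine (hfy.tendsto.comp ?_).mono_left nhdsWithin_le_nhds
    exact (by fun_prop : Continuous fun t : ℝ => y + t • ∇ f x).tendsto' 0 y (by simp)
  refine ge_of_tendsto hlim ?_
  filter_upwards [hf.eventually_lt_add_smul hs hx hy hfx hxy (real_inner_self_pos.2 hg)]
    with t ht using ht.2.le

theorem QuasiconvexOn.mul_inner_gradient_le (hf : QuasiconvexOn ℝ s f) (hx : x ∈ s) {θ : ℝ}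
    (hθ : θ ∈ Set.Icc (0 : ℝ) 1) {v : E} (hu : f (x + θ • (y - x)) = f y)
    (hev : ∀ᶠ t in 𝓝[>] (0 : ℝ), y + t • v ∈ s ∧ f x ≤ f (y + t • v))
    (hfu : DifferentiableAt ℝ f (x + θ • (y - x))) (hfy : DifferentiableAt ℝ f y) :
    θ * ⟪∇ f (x + θ • (y - x)), v⟫ ≤ ⟪∇ f y, v⟫ := by
  rw [← real_inner_smul_right]
  refine inner_gradient_le_of_eventually_le hfu hfy hu ?_
  filter_upwards [hev] with t ⟨hts, hle⟩
  have := ((hf _).add_smul_sub_mem ⟨hx, hle⟩ ⟨hts, le_rfl⟩ hθ).2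
  rwa [show x + θ • (y + t • v - x) = x + θ • (y - x) + t • θ • v by module] at this

theorem QuasiconvexOn.sameRay_gradient_of_le_of_inner_nonneg (hf : QuasiconvexOn ℝ s f)
    (hs : IsOpen s) (hx : x ∈ s) (hy : y ∈ s) (hfx : DifferentiableAt ℝ f x)
    (hfy : DifferentiableAt ℝ f y) (hg : ∇ f x ≠ 0) (hyx : f y ≤ f x)
    (hxy : 0 ≤ ⟪∇ f x, y - x⟫) : SameRay ℝ (∇ f y) (∇ f x) := by
  refine sameRay_of_forall_inner_nonneg hg fun d hd => ?_
  have := inner_gradient_le_of_eventually_le (v := 0) (w := d) hfy hfy rfl <| by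
    filter_upwards [hf.eventually_lt_add_smul hs hx hy hfx hxy hd] with t ht
    rw [smul_zero, add_zero]
    exact hyx.trans ht.2.le
  rwa [inner_zero_right] at this

theorem QuasiconvexOn.inner_gradient_pos_of_isMinOn {S : Set E} (hf : QuasiconvexOn ℝ s f)
    (hs : IsOpen s) (hS : Convex ℝ S) (hSs : S ⊆ s) (hdiff : ∀ z ∈ s, DifferentiableAt ℝ f z)
    (hxS : x ∈ S) (hx : IsMinOn f S x) (hyS : y ∈ S) (hy : IsMinOn f S y)
    (hcont : ContinuousAt (∇ f) x) (hg : ∇ f x ≠ 0) : 0 < ⟪∇ f y, ∇ f x⟫ := by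
  have hfy : f y = f x := le_antisymm (hy hxS) (hx hyS)
  have hline : Tendsto (fun θ : ℝ => x + θ • (y - x)) (𝓝 0) (𝓝 x) :=
    (by fun_prop : Continuous fun θ : ℝ => x + θ • (y - x)).tendsto' 0 x (by simp)
  have hpos : ∀ᶠ θ in 𝓝 (0 : ℝ), 0 < ⟪∇ f (x + θ • (y - x)), ∇ f x⟫ :=
    ((hcont.tendsto.comp hline).inner tendsto_const_nhds).eventually
      (eventually_gt_nhds (real_inner_self_pos.2 hg))
  obtain ⟨θ, hθg, hθ⟩ := ((hpos.filter_mono nhdsWithin_le_nhds).and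
    (Ioc_mem_nhdsGT (zero_lt_one (α := ℝ)))).exists
  have huS : x + θ • (y - x) ∈ S := hS.add_smul_sub_mem hxS hyS ⟨hθ.1.le, hθ.2⟩
  have hfu : f (x + θ • (y - x)) = f y := le_antisymm
    ((hf (f y)).add_smul_sub_mem ⟨hSs hxS, hfy.ge⟩ ⟨hSs hyS, le_rfl⟩ ⟨hθ.1.le, hθ.2⟩).2
    (hy huS)
  have hev := hf.eventually_lt_add_smul hs (hSs hxS) (hSs hyS) (hdiff x (hSs hxS))
    (hx.inner_gradient_nonneg hS hxS hyS (hdiff x (hSs hxS))) (real_inner_self_pos.2 hg)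
  refine (mul_pos hθ.1 hθg).trans_le (hf.mul_inner_gradient_le (hSs hxS) ⟨hθ.1.le, hθ.2⟩ hfu
    (hev.mono fun t ht => ⟨ht.1, ht.2.le⟩) (hdiff _ (hSs huS)) (hdiff y (hSs hyS)))

theorem stmt_6 {n : ℕ} (Γ S : Set (EuclideanSpace ℝ (Fin n)))
    (hΓo : IsOpen Γ) (hΓ : Convex ℝ Γ) (hS : Convex ℝ S) (hSΓ : S ⊆ Γ)
    (f : EuclideanSpace ℝ (Fin n) → ℝ)
    (hC1 : ContDiffOn ℝ 1 f Γ)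
    (hqc : ∀ x ∈ Γ, ∀ y ∈ Γ, ∀ t ∈ Set.Icc (0:ℝ) 1,
        f (x + t • (y - x)) ≤ max (f x) (f y))
    (Sbar : Set (EuclideanSpace ℝ (Fin n)))
    (hSbar : Sbar = {x ∈ S | ∀ y ∈ S, f x ≤ f y})
    (xb : EuclideanSpace ℝ (Fin n)) (hxb : xb ∈ Sbar)
    (hgxb : gradient f xb ≠ 0) :
    Sbar = {x ∈ S | (inner ℝ (gradient f xb) (x - xb) : ℝ) = 0 ∧ gradient f x ≠ 0 ∧
      ‖gradient f x‖⁻¹ • gradient f x = ‖gradient f xb‖⁻¹ • gradient f xb} := by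
  subst hSbar
  obtain ⟨hxbS, hxbmin : IsMinOn f S xb⟩ := hxb
  have hq : QuasiconvexOn ℝ Γ f := quasiconvexOn_of_le_max hΓ hqc
  have hd : ∀ x ∈ Γ, DifferentiableAt ℝ f x := fun x hx =>
    (hC1.differentiableOn one_ne_zero).differentiableAt (hΓo.mem_nhds hx)
  have hxbΓ := hSΓ hxbS
  ext x
  constructor
  · rintro ⟨hxS, hxmin : IsMinOn f S x⟩
    have hxΓ := hSΓ hxS
    have hpos := hq.inner_gradient_pos_of_isMinOn hΓo hS hSΓ hd hxbS hxbmin hxS hxmin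
      (hC1.continuousAt_gradient hΓo hxbΓ) hgxb
    have hgx : ∇ f x ≠ 0 := fun h => by simp [h] at hpos
    have hperp := le_antisymm (hq.inner_gradient_nonpos hxbΓ hxΓ (hd xb hxbΓ) (hxmin hxbS))
      (hxbmin.inner_gradient_nonneg hS hxbS hxS (hd xb hxbΓ))
    refine ⟨hxS, hperp, hgx, (sameRay_iff_inv_norm_smul_eq_of_ne hgx hgxb).1 ?_⟩
    exact hq.sameRay_gradient_of_le_of_inner_nonneg hΓo hxbΓ hxΓ (hd xb hxbΓ) (hd x hxΓ) hgxb
      (hxmin hxbS) hperp.ge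
  · rintro ⟨hxS, hperp, hgx, hray⟩
    obtain ⟨r, -, hr⟩ :=
      ((sameRay_iff_inv_norm_smul_eq_of_ne hgx hgxb).2 hray).exists_nonneg_right hgxb
    refine ⟨hxS, fun y hy => le_trans ?_ (hxbmin hy)⟩
    refine hq.le_of_inner_gradient_nonneg hΓo (hSΓ hxS) hxbΓ (hd x (hSΓ hxS))
      (hd xb hxbΓ).continuousAt hgx ?_
    rw [hr, real_inner_smul_left, ← neg_sub, inner_neg_right, hperp, neg_zero, mul_zero]
end

section
/- Let Γ ⊆ ℝⁿ be open and convex, S ⊆ Γ convex, f : Γ → ℝ continuously differentiable and quasiconvex. Suppose x̄ is a global minimizer of f over S with ∇f(x̄) = 0, and suppose f is pseudoconvex at every point x ∈ S that is not a global minimizer. Then the solution set S̄ equals {x ∈ S | ∇f(x) = 0}. -/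
/-!
Let `x` be a second minimizer of `f` over `S`. By quasiconvexity `f` equals `f x` on the segment
`[x, xb]`, and for `z = x + t • (xb - x)` with `0 < t ≤ 1` the identity
`z + w = x + t • ((xb + t⁻¹ • w) - x)` gives
`f (z + w) ≤ max (f x) (f (xb + t⁻¹ • w)) ≤ f z + o(‖w‖)`, because `∇f(xb) = 0`.
A differentiable function bounded above by `f z + o(‖w‖)` has zero derivative at `z`, so `∇f`
vanishes on the half-open segment `(x, xb]`, hence at `x` by continuity of `∇f`.
Conversely, a stationary point of `S` that is not a minimizer would contradict pseudoconvexity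
with `y = xb`.
-/

open Set Filter Topology

section

variable {E : Type*} [NormedAddCommGroup E] [NormedSpace ℝ E]

/-- `0` is a Fréchet supergradient of `f` at `z`. -/
def HasZeroSupergradientAt (f : E → ℝ) (z : E) : Prop :=
  ∀ ε > 0, ∀ᶠ w in 𝓝 0, f (z + w) ≤ f z + ε * ‖w‖

theorem HasFDerivAt.hasZeroSupergradientAt {f : E → ℝ} {z : E}
    (hf : HasFDerivAt f (0 : E →L[ℝ] ℝ) z) : HasZeroSupergradientAt f z := by
  intro ε hε
  filter_upwards [(hasFDerivAt_iff_isLittleO_nhds_zero.mp hf).def hε] with w hw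
  simp only [zero_apply, sub_zero, Real.norm_eq_abs] at hw
  linarith [le_abs_self (f (z + w) - f z)]

theorem HasFDerivAt.apply_nonpos_of_hasZeroSupergradientAt {f : E → ℝ} {f' : E →L[ℝ] ℝ} {z : E}
    (hf : HasFDerivAt f f' z) (hsup : HasZeroSupergradientAt f z) (d : E) : f' d ≤ 0 := by
  have hray : HasDerivAt (fun s : ℝ => z + s • d) d 0 := by
    simpa using ((hasDerivAt_id (0 : ℝ)).smul_const d).const_add z
  have hf0 : HasFDerivAt f f' (z + (0 : ℝ) • d) := by simpa using hf
  have hline : HasDerivAt (fun s : ℝ => f (z + s • d)) (f' d) 0 := hf0.comp_hasDerivAt 0 hray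
  have hslope : Tendsto (fun s : ℝ => s⁻¹ * (f (z + s • d) - f z)) (𝓝[>] 0) (𝓝 (f' d)) := by
    refine ((hasDerivAt_iff_tendsto_slope.mp hline).mono_left (nhdsGT_le_nhdsNE 0)).congr
      fun s => ?_
    simp [slope]
  have hsmul : Tendsto (fun s : ℝ => s • d) (𝓝[>] 0) (𝓝 0) :=
    ((continuous_id.smul continuous_const).tendsto' 0 0 (by simp)).mono_left nhdsWithin_le_nhds
  have hbound : ∀ ε > 0, f' d ≤ ε * ‖d‖ := by
    intro ε hε
    refine le_of_tendsto hslope ?_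
    filter_upwards [hsmul.eventually (hsup ε hε), self_mem_nhdsWithin] with s hs (hs0 : 0 < s)
    rw [norm_smul, Real.norm_of_nonneg hs0.le] at hs
    rw [inv_mul_le_iff₀ hs0]
    linarith
  have hε : Tendsto (fun ε : ℝ => ε * ‖d‖) (𝓝[>] 0) (𝓝 0) :=
    ((continuous_id.mul continuous_const).tendsto' 0 0 (by simp)).mono_left nhdsWithin_le_nhds
  exact ge_of_tendsto hε (eventually_nhdsWithin_of_forall hbound)

theorem HasFDerivAt.eq_zero_of_hasZeroSupergradientAt {f : E → ℝ} {f' : E →L[ℝ] ℝ} {z : E}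
    (hf : HasFDerivAt f f' z) (hsup : HasZeroSupergradientAt f z) : f' = 0 := by
  ext d
  have hneg := hf.apply_nonpos_of_hasZeroSupergradientAt hsup (-d)
  rw [map_neg] at hneg
  exact le_antisymm (hf.apply_nonpos_of_hasZeroSupergradientAt hsup d) (by simpa using hneg)

theorem HasZeroSupergradientAt.add_smul_sub_of_le_max {Γ : Set E} (hΓo : IsOpen Γ) {f : E → ℝ}
    (hqc : ∀ x ∈ Γ, ∀ y ∈ Γ, ∀ t ∈ Icc (0 : ℝ) 1, f (x + t • (y - x)) ≤ max (f x) (f y))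
    {x y : E} (hx : x ∈ Γ) (hy : y ∈ Γ) (hsup : HasZeroSupergradientAt f y) (hyx : f y ≤ f x)
    {t : ℝ} (ht : t ∈ Ioc 0 1) (hxz : f x ≤ f (x + t • (y - x))) :
    HasZeroSupergradientAt f (x + t • (y - x)) := by
  intro ε hε
  have ht0 : t ≠ 0 := ht.1.ne'
  have hscale : Tendsto (fun w : E => t⁻¹ • w) (𝓝 0) (𝓝 0) :=
    (continuous_const_smul t⁻¹).tendsto' 0 0 (smul_zero _)
  have hΓ : ∀ᶠ v in 𝓝 (0 : E), y + v ∈ Γ :=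
    ((continuous_const.add continuous_id).tendsto' 0 y (add_zero y)).eventually
      (hΓo.mem_nhds hy)
  filter_upwards [hscale.eventually (hΓ.and (hsup (ε * t) (mul_pos hε ht.1)))]
    with w ⟨hwΓ, hwle⟩
  have hpoint : x + t • (y + t⁻¹ • w - x) = x + t • (y - x) + w := by
    rw [show y + t⁻¹ • w - x = (y - x) + t⁻¹ • w by abel, smul_add, smul_inv_smul₀ ht0, add_assoc]
  have hnorm : ε * t * ‖t⁻¹ • w‖ = ε * ‖w‖ := by
    rw [norm_smul, norm_inv, Real.norm_of_nonneg ht.1.le]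
    field_simp
  have hmax := hqc x hx _ hwΓ t (Ioc_subset_Icc_self ht)
  rw [hpoint] at hmax
  refine hmax.trans (max_le ?_ ?_)
  · nlinarith [norm_nonneg w]
  · linarith

theorem fderiv_eq_zero_of_isMinOn_of_le_max {Γ S : Set E} (hΓo : IsOpen Γ) (hS : Convex ℝ S)
    (hSΓ : S ⊆ Γ) {f : E → ℝ} (hC1 : ContDiffOn ℝ 1 f Γ)
    (hqc : ∀ x ∈ Γ, ∀ y ∈ Γ, ∀ t ∈ Icc (0 : ℝ) 1, f (x + t • (y - x)) ≤ max (f x) (f y))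
    {x xb : E} (hx : x ∈ S) (hxb : xb ∈ S) (hxmin : IsMinOn f S x) (hxbmin : IsMinOn f S xb)
    (hfxb : HasFDerivAt f (0 : E →L[ℝ] ℝ) xb) : fderiv ℝ f x = 0 := by
  have hseg : ∀ t ∈ Ioc (0 : ℝ) 1, fderiv ℝ f (x + t • (xb - x)) = 0 := by
    intro t ht
    have hzS : x + t • (xb - x) ∈ S := hS.add_smul_sub_mem hx hxb (Ioc_subset_Icc_self ht)
    have hdiff : DifferentiableAt ℝ f (x + t • (xb - x)) :=
      (hC1.contDiffAt (hΓo.mem_nhds (hSΓ hzS))).differentiableAt one_ne_zero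
    exact hdiff.hasFDerivAt.eq_zero_of_hasZeroSupergradientAt
      (hfxb.hasZeroSupergradientAt.add_smul_sub_of_le_max hΓo hqc (hSΓ hx) (hSΓ hxb)
        (hxbmin hx) ht (hxmin hzS))
  have hcont : ContinuousAt (fderiv ℝ f) x :=
    (hC1.continuousOn_fderiv_of_isOpen hΓo le_rfl).continuousAt (hΓo.mem_nhds (hSΓ hx))
  have hline : Tendsto (fun t : ℝ => x + t • (xb - x)) (𝓝[>] 0) (𝓝 x) :=
    ((continuous_const.add (continuous_id.smul continuous_const)).tendsto' 0 x
      (by simp)).mono_left nhdsWithin_le_nhds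
  refine tendsto_nhds_unique (hcont.tendsto.comp hline) (tendsto_const_nhds.congr' ?_)
  filter_upwards [Ioc_mem_nhdsGT zero_lt_one] with t ht
  exact (hseg t ht).symm

end

theorem stmt_8_general {n : ℕ} (Γ S : Set (EuclideanSpace ℝ (Fin n)))
    (hΓo : IsOpen Γ) (hS : Convex ℝ S) (hSΓ : S ⊆ Γ)
    (f : EuclideanSpace ℝ (Fin n) → ℝ)
    (hC1 : ContDiffOn ℝ 1 f Γ)
    (hqc : ∀ x ∈ Γ, ∀ y ∈ Γ, ∀ t ∈ Set.Icc (0:ℝ) 1,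
        f (x + t • (y - x)) ≤ max (f x) (f y))
    (Sbar : Set (EuclideanSpace ℝ (Fin n)))
    (hSbar : Sbar = {x ∈ S | ∀ y ∈ S, f x ≤ f y})
    (xb : EuclideanSpace ℝ (Fin n)) (hxb : xb ∈ Sbar)
    (hgxb : gradient f xb = 0)
    (hpc : ∀ x ∈ S, x ∉ Sbar → ∀ y ∈ Γ, f y < f x →
      (inner ℝ (gradient f x) (y - x) : ℝ) < 0) :
    Sbar = {x ∈ S | gradient f x = 0} := by
  subst hSbar
  obtain ⟨hxbS, hxbmin⟩ := hxb
  have hfxb : HasFDerivAt f (0 : EuclideanSpace ℝ (Fin n) →L[ℝ] ℝ) xb := by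
    have hdiff : DifferentiableAt ℝ f xb :=
      (hC1.contDiffAt (hΓo.mem_nhds (hSΓ hxbS))).differentiableAt one_ne_zero
    simpa [hgxb] using hdiff.hasGradientAt.hasFDerivAt
  ext x
  refine ⟨fun ⟨hxS, hxmin⟩ => ⟨hxS, ?_⟩, fun ⟨hxS, hgx⟩ => ⟨hxS, ?_⟩⟩
  · have hfx := fderiv_eq_zero_of_isMinOn_of_le_max hΓo hS hSΓ hC1 hqc hxS hxbS hxmin hxbmin hfxb
    simp [gradient, hfx]
  · by_contra hnot
    obtain ⟨y, hyS, hyx⟩ : ∃ y ∈ S, f y < f x := by simpa using hnot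
    simpa [hgx] using hpc x hxS (fun h => hnot h.2) xb (hSΓ hxbS) ((hxbmin y hyS).trans_lt hyx)

theorem stmt_8 {n : ℕ} (Γ S : Set (EuclideanSpace ℝ (Fin n)))
    (hΓo : IsOpen Γ) (hΓ : Convex ℝ Γ) (hS : Convex ℝ S) (hSΓ : S ⊆ Γ)
    (f : EuclideanSpace ℝ (Fin n) → ℝ)
    (hC1 : ContDiffOn ℝ 1 f Γ)
    (hqc : ∀ x ∈ Γ, ∀ y ∈ Γ, ∀ t ∈ Set.Icc (0:ℝ) 1,
        f (x + t • (y - x)) ≤ max (f x) (f y))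
    (Sbar : Set (EuclideanSpace ℝ (Fin n)))
    (hSbar : Sbar = {x ∈ S | ∀ y ∈ S, f x ≤ f y})
    (xb : EuclideanSpace ℝ (Fin n)) (hxb : xb ∈ Sbar)
    (hgxb : gradient f xb = 0)
    (hpc : ∀ x ∈ S, x ∉ Sbar → ∀ y ∈ Γ, f y < f x →
      (inner ℝ (gradient f x) (y - x) : ℝ) < 0) :
    Sbar = {x ∈ S | gradient f x = 0} :=
  stmt_8_general Γ S hΓo hS hSΓ f hC1 hqc Sbar hSbar xb hxb hgxb hpc
end

section
/- Let Γ ⊆ ℝⁿ be open and convex, S ⊆ Γ convex, f : Γ → ℝ continuously differentiable and quasiconvex. Let x̄ be a global minimizer of f on S with ∇f(x̄) ≠ 0. Then S̄ = {x ∈ S | ⟨∇f(x), x̄ − x⟩ ≥ ⟨∇f(x̄), x − x̄⟩ and ∇f(x) ≠ 0}. -/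
/-!
For a minimizer `x` the inequality is separated by `0`: the first-order condition gives
`f' x (x̄ - x) ≥ 0`, and quasiconvexity gives `f' x̄ (x - x̄) ≤ 0` since `f x ≤ f x̄`.
No minimizer is critical: if `y` were one, quasiconvexity would force every point of the segment
`(x̄, y]` (all of them minimizers) to be critical, and continuity of `f'` would make `x̄` critical.
Conversely, if `f x > f x̄` and `∇f x ≠ 0`, perturbing `x̄` slightly in the direction `∇f x` keeps
the value below `f x`, which yields the strict inequality `f' x (x̄ - x) < 0`, whereas the
first-order condition at `x̄` gives `f' x̄ (x - x̄) ≥ 0`.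
-/

open Filter Set
open scoped Topology

section

variable {E : Type*} [NormedAddCommGroup E] [NormedSpace ℝ E] {s S : Set E} {f : E → ℝ}
  {f' : E →L[ℝ] ℝ} {x y : E}

theorem QuasiconvexOn.add_smul_sub_le_max (hf : QuasiconvexOn ℝ s f) (hx : x ∈ s) (hy : y ∈ s)
    {t : ℝ} (ht : t ∈ Icc (0 : ℝ) 1) : f (x + t • (y - x)) ≤ max (f x) (f y) :=
  ((hf _).add_smul_sub_mem ⟨hx, le_max_left _ _⟩ ⟨hy, le_max_right _ _⟩ ht).2

theorem IsMinOn.hasFDerivAt_sub_nonneg_s12 (h : IsMinOn f S x) (hS : Convex ℝ S) (hx : x ∈ S)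
    (hy : y ∈ S) (hd : HasFDerivAt f f' x) : 0 ≤ f' (y - x) :=
  h.localize.hasFDerivWithinAt_nonneg hd.hasFDerivWithinAt
    (sub_mem_posTangentConeAt_of_segment_subset (hS.segment_subset hx hy))

theorem QuasiconvexOn.hasFDerivWithinAt_sub_nonpos (hf : QuasiconvexOn ℝ s f) (hx : x ∈ s)
    (hy : y ∈ s) (hle : f y ≤ f x) (hd : HasFDerivWithinAt f f' s x) : f' (y - x) ≤ 0 := by
  have hmax : IsMaxOn f (segment ℝ x y) x := by
    rw [segment_eq_image']
    rintro _ ⟨t, ht, rfl⟩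
    exact (hf.add_smul_sub_le_max hx hy ht).trans (max_le le_rfl hle)
  exact hmax.localize.hasFDerivWithinAt_nonpos (hd.mono (hf.convex.segment_subset hx hy))
    (sub_mem_posTangentConeAt_of_segment_subset subset_rfl)

theorem QuasiconvexOn.hasFDerivAt_sub_neg (hf : QuasiconvexOn ℝ s f) (hx : x ∈ s)
    (hy : s ∈ 𝓝 y) (hfy : ContinuousAt f y) (hlt : f y < f x) (hd : HasFDerivAt f f' x)
    (hf' : f' ≠ 0) : f' (y - x) < 0 := by
  obtain ⟨w, hw⟩ : ∃ w, f' w = 1 := by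
    obtain ⟨v, hv⟩ := DFunLike.ne_iff.mp hf'
    exact ⟨(f' v)⁻¹ • v, by simp_all⟩
  have hline : Tendsto (fun ε : ℝ => y + ε • w) (𝓝 0) (𝓝 y) :=
    Continuous.tendsto' (by fun_prop) 0 y (by simp)
  have hnear : ∀ᶠ ε in 𝓝 (0 : ℝ), y + ε • w ∈ s ∧ f (y + ε • w) < f x :=
    (hline.eventually_mem hy).and (hline.eventually (hfy.eventually (eventually_lt_nhds hlt)))
  obtain ⟨ε, ⟨hεs, hεf⟩, hε⟩ :=
    ((hnear.filter_mono nhdsWithin_le_nhds).and self_mem_nhdsWithin).exists (f := 𝓝[>] (0 : ℝ))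
  have hstep := hf.hasFDerivWithinAt_sub_nonpos hx hεs hεf.le hd.hasFDerivWithinAt
  rw [show y + ε • w - x = (y - x) + ε • w by abel, map_add, map_smul, hw, smul_eq_mul,
    mul_one] at hstep
  linarith [show (0 : ℝ) < ε from hε]

theorem le_max_zero_of_eventually_sub_le_max {h φ : ℝ → ℝ} {a b : ℝ} (hh : HasDerivAt h a 0)
    (hφ : HasDerivAt φ b 0) (hle : ∀ᶠ t in 𝓝[>] 0, h t - h 0 ≤ max 0 (φ t - φ 0)) :
    a ≤ max 0 b := by
  refine le_of_tendsto_of_tendsto hh.tendsto_slope_zero_right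
    (tendsto_const_nhds.max hφ.tendsto_slope_zero_right) ?_
  filter_upwards [hle, self_mem_nhdsWithin] with t ht htpos
  have htinv : 0 ≤ t⁻¹ := inv_nonneg.2 (le_of_lt htpos)
  simp only [zero_add, smul_eq_mul]
  calc t⁻¹ * (h t - h 0) ≤ t⁻¹ * max 0 (φ t - φ 0) := mul_le_mul_of_nonneg_left ht htinv
    _ = max 0 (t⁻¹ * (φ t - φ 0)) := by rw [mul_max_of_nonneg _ _ htinv, mul_zero]

/-- Moving the endpoint `y` to `y + t • v` moves `p = x + θ • (y - x)` to `p + t • θ • v`, so the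
quasiconvex bound `f (p + t • θ • v) ≤ max (f x) (f (y + t • v))` differentiates to
`θ * f' v ≤ max 0 (0 v)`. -/
theorem QuasiconvexOn.hasFDerivAt_eq_zero_of_critical_endpoint (hf : QuasiconvexOn ℝ s f)
    (hx : x ∈ s) (hy : s ∈ 𝓝 y) {θ : ℝ} (hθ : θ ∈ Ioc (0 : ℝ) 1)
    (hfx : f x ≤ f (x + θ • (y - x))) (hfy : f y ≤ f (x + θ • (y - x)))
    (hp : HasFDerivAt f f' (x + θ • (y - x))) (hy0 : HasFDerivAt f (0 : E →L[ℝ] ℝ) y) :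
    f' = 0 := by
  set p := x + θ • (y - x)
  suffices hnonpos : ∀ v, f' v ≤ 0 from
    ContinuousLinearMap.ext fun v => le_antisymm (hnonpos v) (by simpa using hnonpos (-v))
  intro v
  have hline : Tendsto (fun t : ℝ => y + t • v) (𝓝 0) (𝓝 y) :=
    Continuous.tendsto' (by fun_prop) 0 y (by simp)
  have hmem : ∀ᶠ t in 𝓝 (0 : ℝ), y + t • v ∈ s := hline.eventually_mem hy
  have hev : ∀ᶠ t in 𝓝[>] (0 : ℝ), f (p + t • (θ • v)) - f (p + (0 : ℝ) • (θ • v)) ≤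
      max 0 (f (y + t • v) - f (y + (0 : ℝ) • v)) := by
    filter_upwards [hmem.filter_mono nhdsWithin_le_nhds] with t ht
    have hq := hf.add_smul_sub_le_max hx ht ⟨hθ.1.le, hθ.2⟩
    rw [show x + θ • (y + t • v - x) = p + t • (θ • v) by simp only [p]; module] at hq
    simp only [zero_smul, add_zero]
    calc f (p + t • (θ • v)) - f p ≤ max (f x - f p) (f (y + t • v) - f p) := by
          rw [max_sub_sub_right]; linarith
      _ ≤ max 0 (f (y + t • v) - f y) := max_le_max (by linarith) (by linarith)
  have h := le_max_zero_of_eventually_sub_le_max (hp.hasLineDerivAt (θ • v))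
    (hy0.hasLineDerivAt v) hev
  rw [map_smul, smul_eq_mul, zero_apply, max_self] at h
  exact nonpos_of_mul_nonpos_right h hθ.1

theorem QuasiconvexOn.fderiv_eq_zero_of_isMinOn (hf : QuasiconvexOn ℝ s f) (hs : IsOpen s)
    (hd : DifferentiableOn ℝ f s) (hc : ContinuousAt (fderiv ℝ f) x) (hS : Convex ℝ S)
    (hSs : S ⊆ s) (hx : x ∈ S) (hy : y ∈ S) (hxmin : IsMinOn f S x) (hymin : IsMinOn f S y)
    (hy0 : fderiv ℝ f y = 0) : fderiv ℝ f x = 0 := by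
  have hderiv : ∀ z ∈ S, HasFDerivAt f (fderiv ℝ f z) z := fun z hz =>
    (hd.differentiableAt (hs.mem_nhds (hSs hz))).hasFDerivAt
  have hcrit : ∀ θ ∈ Ioc (0 : ℝ) 1, fderiv ℝ f (x + θ • (y - x)) = 0 := by
    intro θ hθ
    have hpS := hS.add_smul_sub_mem hx hy (Ioc_subset_Icc_self hθ)
    have hfy : f y = f x := le_antisymm (hymin hx) (hxmin hy)
    exact hf.hasFDerivAt_eq_zero_of_critical_endpoint (hSs hx) (hs.mem_nhds (hSs hy)) hθ
      (hxmin hpS) (hfy ▸ hxmin hpS) (hderiv _ hpS) (hy0 ▸ hderiv y hy)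
  have hline : Tendsto (fun θ : ℝ => x + θ • (y - x)) (𝓝[>] 0) (𝓝 x) :=
    (Continuous.tendsto' (by fun_prop) 0 x (by simp)).mono_left nhdsWithin_le_nhds
  refine tendsto_nhds_unique (hc.tendsto.comp hline) (tendsto_const_nhds.congr' ?_)
  filter_upwards [Ioc_mem_nhdsGT zero_lt_one] with θ hθ
  exact (hcrit θ hθ).symm

end

theorem gradient_eq_zero_iff {F : Type*} [NormedAddCommGroup F] [InnerProductSpace ℝ F]
    [CompleteSpace F] {f : F → ℝ} {x : F} : gradient f x = 0 ↔ fderiv ℝ f x = 0 := by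
  simp [gradient]

theorem stmt_12 {n : ℕ} (Γ S : Set (EuclideanSpace ℝ (Fin n)))
    (hΓo : IsOpen Γ) (hΓ : Convex ℝ Γ) (hS : Convex ℝ S) (hSΓ : S ⊆ Γ)
    (f : EuclideanSpace ℝ (Fin n) → ℝ)
    (hC1 : ContDiffOn ℝ 1 f Γ)
    (hqc : ∀ x ∈ Γ, ∀ y ∈ Γ, ∀ t ∈ Set.Icc (0:ℝ) 1,
        f (x + t • (y - x)) ≤ max (f x) (f y))
    (Sbar : Set (EuclideanSpace ℝ (Fin n)))
    (hSbar : Sbar = {x ∈ S | ∀ y ∈ S, f x ≤ f y})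
    (xb : EuclideanSpace ℝ (Fin n)) (hxb : xb ∈ Sbar)
    (hgxb : gradient f xb ≠ 0) :
    Sbar = {x ∈ S | (inner ℝ (gradient f x) (xb - x) : ℝ) ≥ (inner ℝ (gradient f xb) (x - xb) : ℝ) ∧
      gradient f x ≠ 0} := by
  have hf : QuasiconvexOn ℝ Γ f := by
    refine quasiconvexOn_iff_le_max.2 ⟨hΓ, fun x hx y hy a b ha hb hab => ?_⟩
    obtain rfl : a = 1 - b := by linarith
    simpa only [show x + b • (y - x) = (1 - b) • x + b • y by module]
      using hqc x hx y hy b ⟨hb, by linarith⟩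
  have hd : DifferentiableOn ℝ f Γ := hC1.differentiableOn one_ne_zero
  have hderiv : ∀ z ∈ S, HasFDerivAt f (fderiv ℝ f z) z := fun z hz =>
    (hd.differentiableAt (hΓo.mem_nhds (hSΓ hz))).hasFDerivAt
  subst hSbar
  obtain ⟨hxbS, hxbmin⟩ := hxb
  rw [Ne, gradient_eq_zero_iff] at hgxb
  ext x
  simp only [mem_ofPred_eq, inner_gradient_left, ge_iff_le, Ne, gradient_eq_zero_iff]
  constructor
  · rintro ⟨hxS, hxmin⟩
    refine ⟨hxS, ?_, fun hx0 => hgxb ?_⟩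
    · linarith [IsMinOn.hasFDerivAt_sub_nonneg_s12 hxmin hS hxS hxbS (hderiv x hxS),
        hf.hasFDerivWithinAt_sub_nonpos (hSΓ hxbS) (hSΓ hxS) (hxmin xb hxbS)
          (hderiv xb hxbS).hasFDerivWithinAt]
    · exact hf.fderiv_eq_zero_of_isMinOn hΓo hd
        ((hC1.continuousOn_fderiv_of_isOpen hΓo le_rfl).continuousAt (hΓo.mem_nhds (hSΓ hxbS)))
        hS hSΓ hxbS hxS hxbmin hxmin hx0
  · rintro ⟨hxS, hineq, hgx⟩
    refine ⟨hxS, fun y hy => le_trans ?_ (hxbmin y hy)⟩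
    by_contra! hlt
    linarith [IsMinOn.hasFDerivAt_sub_nonneg_s12 hxbmin hS hxbS hxS (hderiv xb hxbS),
      hf.hasFDerivAt_sub_neg (hSΓ hxS) (hΓo.mem_nhds (hSΓ hxbS)) (hderiv xb hxbS).continuousAt
        hlt (hderiv x hxS) hgx]
end

section
/- Let Γ ⊆ ℝⁿ be open and convex, S ⊆ Γ convex, f : Γ → ℝ continuously differentiable and pseudoconvex on Γ. Let x̄ be a known global minimizer of f on S. Then S̄ = {x ∈ S | ⟨∇f(x̄), x − x̄⟩ = 0 and ∃ p > 0 with ∇f(x) = p·∇f(x̄)}. -/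
/-!
Let `x` and `x̄` both minimize `f` on `S`. First-order optimality on the convex set `S` gives
`⟪∇f x̄, x - x̄⟫ ≥ 0` and `⟪∇f x, x̄ - x⟫ ≥ 0`. Pseudoconvexity makes `x̄` a minimizer of `f` over the
part of `Γ` in the half-space `{y | ⟪∇f x̄, y - x̄⟫ ≥ 0}`, which contains `x`; as `f x = f x̄`, `x` is a
local minimizer there too, so first-order optimality at `x` shows that `∇f x` is nonnegative on every
direction on which `∇f x̄` is. By symmetry the two gradients define the same closed half-space of
directions, hence are positive multiples of each other, and then `⟪∇f x̄, x - x̄⟫ = 0`. Conversely,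
such an `x` satisfies `⟪∇f x, x̄ - x⟫ = 0`, so pseudoconvexity forbids `f x̄ < f x`.
-/

open scoped RealInnerProductSpace

variable {E : Type*} [NormedAddCommGroup E] [InnerProductSpace ℝ E]

theorem exists_nonneg_smul_of_inner_nonneg_imp {a b : E}
    (h : ∀ u, 0 ≤ ⟪a, u⟫ → 0 ≤ ⟪b, u⟫) : ∃ c : ℝ, 0 ≤ c ∧ b = c • a := by
  have horth : ∀ u, ⟪a, u⟫ = 0 → ⟪b, u⟫ = 0 := fun u hu =>
    le_antisymm (by simpa [inner_neg_right] using h (-u) (by simp [inner_neg_right, hu]))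
      (h u hu.ge)
  have hb : b ∈ ℝ ∙ a := by
    rw [← Submodule.orthogonal_orthogonal (ℝ ∙ a)]
    intro u hu
    rw [real_inner_comm]
    exact horth u (Submodule.mem_orthogonal_singleton_iff_inner_right.mp hu)
  obtain ⟨c, rfl⟩ := Submodule.mem_span_singleton.mp hb
  by_cases ha : a = 0
  · exact ⟨0, le_rfl, by simp [ha]⟩
  · have haa := h a real_inner_self_nonneg
    rw [real_inner_smul_left] at haa
    exact ⟨c, nonneg_of_mul_nonneg_left haa (real_inner_self_pos.mpr ha), rfl⟩

theorem exists_pos_smul_of_inner_nonneg_iff {a b : E} (h : ∀ u, 0 ≤ ⟪a, u⟫ ↔ 0 ≤ ⟪b, u⟫) :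
    ∃ p : ℝ, 0 < p ∧ b = p • a := by
  obtain ⟨c, hc, rfl⟩ := exists_nonneg_smul_of_inner_nonneg_imp fun u => (h u).1
  obtain ⟨d, -, had⟩ := exists_nonneg_smul_of_inner_nonneg_imp fun u => (h u).2
  rcases hc.lt_or_eq with hc | rfl
  · exact ⟨c, hc, rfl⟩
  · rw [zero_smul, smul_zero] at had
    exact ⟨1, one_pos, by simp [had]⟩

variable [CompleteSpace E]

theorem IsLocalMinOn.inner_nonneg_of_hasGradientAt {f : E → ℝ} {s : Set E} {x y g : E}
    (h : IsLocalMinOn f s x) (hf : HasGradientAt f g x) (hs : Convex ℝ s) (hx : x ∈ s)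
    (hy : y ∈ s) : 0 ≤ ⟪g, y - x⟫ := by
  simpa using h.hasFDerivWithinAt_nonneg hf.hasFDerivAt.hasFDerivWithinAt
    (sub_mem_posTangentConeAt_of_segment_subset (hs.segment_subset hx hy))

def PseudoconvexOn (f : E → ℝ) (Γ : Set E) : Prop :=
  ∀ x ∈ Γ, ∀ y ∈ Γ, f y < f x → ⟪gradient f x, y - x⟫ < 0

namespace PseudoconvexOn

variable {f : E → ℝ} {Γ : Set E} {x₀ x : E}

theorem le_of_inner_gradient_nonneg (hf : PseudoconvexOn f Γ) (hx₀ : x₀ ∈ Γ) (hx : x ∈ Γ)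
    (h : 0 ≤ ⟪gradient f x₀, x - x₀⟫) : f x₀ ≤ f x :=
  not_lt.mp fun hlt => (hf x₀ hx₀ x hx hlt).not_ge h

theorem inner_gradient_nonneg_of_inner_gradient_nonneg (hf : PseudoconvexOn f Γ)
    (hΓ : IsOpen Γ) (hx₀ : x₀ ∈ Γ) (hx : x ∈ Γ) (hfx : f x = f x₀)
    (hdiff : DifferentiableAt ℝ f x) (h₀ : 0 ≤ ⟪gradient f x₀, x - x₀⟫) {u : E}
    (hu : 0 ≤ ⟪gradient f x₀, u⟫) : 0 ≤ ⟪gradient f x, u⟫ := by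
  set K := {y | ⟪gradient f x₀, x₀⟫ ≤ ⟪gradient f x₀, y⟫}
  have hK : Convex ℝ K := convex_halfSpace_ge (innerₛₗ ℝ (gradient f x₀)).isLinear _
  have hmem : ∀ y, y ∈ K ↔ 0 ≤ ⟪gradient f x₀, y - x₀⟫ := fun y => by
    simp [K, inner_sub_right]
  have hmin : IsLocalMinOn f K x := by
    filter_upwards [self_mem_nhdsWithin, nhdsWithin_le_nhds (hΓ.mem_nhds hx)] with y hyK hyΓ
    exact hfx ▸ hf.le_of_inner_gradient_nonneg hx₀ hyΓ ((hmem y).mp hyK)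
  have hxu : x + u ∈ K := by
    rw [hmem, add_sub_right_comm, inner_add_right]
    exact add_nonneg h₀ hu
  simpa using hmin.inner_nonneg_of_hasGradientAt hdiff.hasGradientAt hK
    ((hmem x).mpr h₀) hxu

end PseudoconvexOn

theorem stmt_14_general {n : ℕ} (Γ S : Set (EuclideanSpace ℝ (Fin n)))
    (hΓo : IsOpen Γ) (hS : Convex ℝ S) (hSΓ : S ⊆ Γ)
    (f : EuclideanSpace ℝ (Fin n) → ℝ)
    (hC1 : ContDiffOn ℝ 1 f Γ)
    (hpc : ∀ x ∈ Γ, ∀ y ∈ Γ, f y < f x → (inner ℝ (gradient f x) (y - x) : ℝ) < 0)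
    (Sbar : Set (EuclideanSpace ℝ (Fin n)))
    (hSbar : Sbar = {x ∈ S | ∀ y ∈ S, f x ≤ f y})
    (xb : EuclideanSpace ℝ (Fin n)) (hxb : xb ∈ Sbar) :
    Sbar = {x ∈ S | (inner ℝ (gradient f xb) (x - xb) : ℝ) = 0 ∧
      ∃ p : ℝ, 0 < p ∧ gradient f x = p • gradient f xb} := by
  subst hSbar
  obtain ⟨hxbS, hxbmin⟩ := hxb
  have hpc : PseudoconvexOn f Γ := hpc
  have hdiff : ∀ z ∈ S, DifferentiableAt ℝ f z := fun z hz =>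
    (hC1.contDiffAt (hΓo.mem_nhds (hSΓ hz))).differentiableAt one_ne_zero
  have hfirst : ∀ z ∈ S, (∀ y ∈ S, f z ≤ f y) → ∀ y ∈ S, 0 ≤ ⟪gradient f z, y - z⟫ :=
    fun z hz hmin y hy => (isMinOn_iff.mpr hmin).localize.inner_nonneg_of_hasGradientAt
      (hdiff z hz).hasGradientAt hS hz hy
  ext x
  constructor
  · rintro ⟨hxS, hxmin⟩
    have hfx : f x = f xb := le_antisymm (hxmin xb hxbS) (hxbmin x hxS)
    have h₁ := hfirst xb hxbS hxbmin x hxS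
    have h₂ := hfirst x hxS hxmin xb hxbS
    obtain ⟨p, hp, hgrad⟩ := exists_pos_smul_of_inner_nonneg_iff fun u =>
      ⟨hpc.inner_gradient_nonneg_of_inner_gradient_nonneg hΓo (hSΓ hxbS) (hSΓ hxS) hfx
          (hdiff x hxS) h₁,
        hpc.inner_gradient_nonneg_of_inner_gradient_nonneg hΓo (hSΓ hxS) (hSΓ hxbS) hfx.symm
          (hdiff xb hxbS) h₂⟩
    refine ⟨hxS, le_antisymm ?_ h₁, p, hp, hgrad⟩
    rw [hgrad, real_inner_smul_left, ← neg_sub, inner_neg_right] at h₂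
    nlinarith
  · rintro ⟨hxS, horth, p, -, hgrad⟩
    refine ⟨hxS, fun y hy => le_trans ?_ (hxbmin y hy)⟩
    refine hpc.le_of_inner_gradient_nonneg (hSΓ hxS) (hSΓ hxbS) ?_
    rw [hgrad, real_inner_smul_left, ← neg_sub, inner_neg_right, horth]
    simp

theorem stmt_14 {n : ℕ} (Γ S : Set (EuclideanSpace ℝ (Fin n)))
    (hΓo : IsOpen Γ) (hΓ : Convex ℝ Γ) (hS : Convex ℝ S) (hSΓ : S ⊆ Γ)
    (f : EuclideanSpace ℝ (Fin n) → ℝ)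
    (hC1 : ContDiffOn ℝ 1 f Γ)
    (hpc : ∀ x ∈ Γ, ∀ y ∈ Γ, f y < f x → (inner ℝ (gradient f x) (y - x) : ℝ) < 0)
    (Sbar : Set (EuclideanSpace ℝ (Fin n)))
    (hSbar : Sbar = {x ∈ S | ∀ y ∈ S, f x ≤ f y})
    (xb : EuclideanSpace ℝ (Fin n)) (hxb : xb ∈ Sbar) :
    Sbar = {x ∈ S | (inner ℝ (gradient f xb) (x - xb) : ℝ) = 0 ∧
      ∃ p : ℝ, 0 < p ∧ gradient f x = p • gradient f xb} :=
  stmt_14_general Γ S hΓo hS hSΓ f hC1 hpc Sbar hSbar xb hxb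
end

section
/- Let Γ ⊆ ℝⁿ be open and convex, S ⊆ Γ convex, f : Γ → ℝ continuously differentiable, quasiconvex and convex, and let x̄ be a global minimizer of f on S with ∇f(x̄) ≠ 0. Then for every global minimizer x of f on S, ∇f(x) = ∇f(x̄). -/
/-!
Let `c` be the midpoint of two minimizers `x`, `x̄`; it is again a minimizer, so `f c` is at least
the mean of `f x` and `f x̄`. The tangent plane of `f` at `c` lies below `f`, and on the two
symmetric points `x`, `x̄` its slopes cancel, so it must touch the graph of `f` at both. Where an
affine minorant touches a differentiable function, the derivative of the function is the slope
of the minorant; hence `∇f(x) = ∇f(c) = ∇f(x̄)`.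
-/

open AffineMap Filter Topology

variable {E : Type*} [NormedAddCommGroup E] [NormedSpace ℝ E]
  {s : Set E} {f : E → ℝ} {f' g : E →L[ℝ] ℝ} {x y : E}

theorem ConvexOn.add_apply_sub_le_of_hasFDerivAt (hf : ConvexOn ℝ s f) (hx : x ∈ s) (hy : y ∈ s)
    (hf' : HasFDerivAt f f' x) : f x + f' (y - x) ≤ f y := by
  set L : ℝ →ᵃ[ℝ] E := lineMap x y
  have hline : ConvexOn ℝ (L ⁻¹' s) (f ∘ L) := hf.comp_affineMap L
  have hderiv : HasDerivAt (f ∘ L) (f' (y - x)) 0 := by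
    have hf'0 : HasFDerivAt f f' (L 0) := by simpa [L] using hf'
    simpa using hf'0.comp_hasDerivAt (0 : ℝ) hasDerivAt_lineMap
  have hslope := hline.le_slope_of_hasDerivAt (x := 0) (y := 1) (by simpa [L] using hx)
    (by simpa [L] using hy) one_pos hderiv
  simp only [L, slope_def_field, Function.comp_apply, lineMap_apply_zero, lineMap_apply_one,
    sub_zero, div_one] at hslope
  linarith

theorem HasFDerivAt.eq_of_isLocalMin_sub (hmin : IsLocalMin (fun z => f z - g z) y)
    (hf' : HasFDerivAt f f' y) : f' = g :=
  sub_eq_zero.mp <| hmin.hasFDerivAt_eq_zero (hf'.sub g.hasFDerivAt)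

theorem ConvexOn.hasFDerivAt_eq_of_eq_add_apply_sub (hf : ConvexOn ℝ s f) (hx : x ∈ s)
    (hg : HasFDerivAt f g x) (hy : s ∈ 𝓝 y) (htouch : f y = f x + g (y - x))
    (hf' : HasFDerivAt f f' y) : f' = g := by
  refine hf'.eq_of_isLocalMin_sub ?_
  filter_upwards [hy] with z hz
  have hle := hf.add_apply_sub_le_of_hasFDerivAt hx hz hg
  simp only [map_sub] at hle htouch ⊢
  linarith

theorem ConvexOn.fderiv_eq_of_le_map_midpoint (hf : ConvexOn ℝ s f) (hs : IsOpen s)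
    (hd : DifferentiableOn ℝ f s) (hx : x ∈ s) (hy : y ∈ s)
    (hmid : (f x + f y) / 2 ≤ f (midpoint ℝ x y)) : fderiv ℝ f x = fderiv ℝ f y := by
  set c := midpoint ℝ x y
  have hc : c ∈ s := hf.1.midpoint_mem hx hy
  have hdiff : ∀ z ∈ s, HasFDerivAt f (fderiv ℝ f z) z := fun z hz =>
    (hd.differentiableAt (hs.mem_nhds hz)).hasFDerivAt
  set g := fderiv ℝ f c
  have hxc := hf.add_apply_sub_le_of_hasFDerivAt hc hx (hdiff c hc)
  have hyc := hf.add_apply_sub_le_of_hasFDerivAt hc hy (hdiff c hc)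
  have hsymm : g (y - c) = -g (x - c) := by
    rw [right_sub_midpoint, ← neg_sub, left_sub_midpoint, smul_neg, map_neg]
  have hgx : fderiv ℝ f x = g :=
    hf.hasFDerivAt_eq_of_eq_add_apply_sub hc (hdiff c hc) (hs.mem_nhds hx) (by linarith)
      (hdiff x hx)
  have hgy : fderiv ℝ f y = g :=
    hf.hasFDerivAt_eq_of_eq_add_apply_sub hc (hdiff c hc) (hs.mem_nhds hy) (by linarith)
      (hdiff y hy)
  rw [hgx, hgy]

theorem stmt_16_general {n : ℕ} (Γ S : Set (EuclideanSpace ℝ (Fin n)))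
    (hΓo : IsOpen Γ) (hS : Convex ℝ S) (hSΓ : S ⊆ Γ)
    (f : EuclideanSpace ℝ (Fin n) → ℝ)
    (hC1 : ContDiffOn ℝ 1 f Γ)
    (hconv : ConvexOn ℝ Γ f)
    (xb : EuclideanSpace ℝ (Fin n))
    (hxb : xb ∈ S ∧ ∀ y ∈ S, f xb ≤ f y)
    (x : EuclideanSpace ℝ (Fin n))
    (hx : x ∈ S ∧ ∀ y ∈ S, f x ≤ f y) :
    gradient f x = gradient f xb := by
  have hmid : midpoint ℝ x xb ∈ S := hS.midpoint_mem hx.1 hxb.1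
  have hfderiv : fderiv ℝ f x = fderiv ℝ f xb :=
    hconv.fderiv_eq_of_le_map_midpoint hΓo (hC1.differentiableOn one_ne_zero) (hSΓ hx.1)
      (hSΓ hxb.1) (by linarith [hx.2 xb hxb.1, hxb.2 x hx.1, hx.2 _ hmid])
  rw [gradient, gradient, hfderiv]

theorem stmt_16 {n : ℕ} (Γ S : Set (EuclideanSpace ℝ (Fin n)))
    (hΓo : IsOpen Γ) (hΓ : Convex ℝ Γ) (hS : Convex ℝ S) (hSΓ : S ⊆ Γ)
    (f : EuclideanSpace ℝ (Fin n) → ℝ)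
    (hC1 : ContDiffOn ℝ 1 f Γ)
    (hqc : ∀ x ∈ Γ, ∀ y ∈ Γ, ∀ t ∈ Set.Icc (0:ℝ) 1,
        f (x + t • (y - x)) ≤ max (f x) (f y))
    (hconv : ConvexOn ℝ Γ f)
    (xb : EuclideanSpace ℝ (Fin n))
    (hxb : xb ∈ S ∧ ∀ y ∈ S, f xb ≤ f y)
    (hgxb : gradient f xb ≠ 0)
    (x : EuclideanSpace ℝ (Fin n))
    (hx : x ∈ S ∧ ∀ y ∈ S, f x ≤ f y) :
    gradient f x = gradient f xb :=
  stmt_16_general Γ S hΓo hS hSΓ f hC1 hconv xb hxb x hx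
end

section
/- Let f and g₁,…,g_m be differentiable quasiconvex functions on an open convex set Γ ⊆ ℝⁿ, X ⊆ Γ convex, and S = {x ∈ X | gᵢ(x) ≤ 0 for all i}. Let x̄ be a global minimizer of f over S satisfying the KKT conditions with multiplier λ ≥ 0 (i.e., ⟨∇f(x̄) + Σ_{i∈I(x̄)} λᵢ∇gᵢ(x̄), x − x̄⟩ ≥ 0 for all x ∈ X and λᵢgᵢ(x̄) = 0), and suppose ∇g_j(x̄) ≠ 0 for every j ∈ I(x̄) with λ_j > 0. Then every global minimizer x of f over S satisfies gᵢ(x) = 0 for all i with gᵢ(x̄) = 0 and λᵢ > 0, and the Lagrangian L(x) = f(x) + Σ_{i∈I(x̄)} λᵢgᵢ(x) is constant over the solution set. -/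
/-!
For a differentiable quasiconvex `h`, `h y ≤ h x` forces `⟪∇h x, y - x⟫ ≤ 0`, since `h` is maximal
at `x` along the segment `[x, y]`. If moreover `h y < h x` and `∇h x ≠ 0`, the same holds at every
point near `y`, in particular at `y + ε ∇h x`, which makes the inequality strict.

Applied at `x̄` to `f` and to the constraints with positive multipliers, every term of the KKT
inequality `⟪∇f x̄, x - x̄⟫ + ∑ λᵢ ⟪∇gᵢ x̄, x - x̄⟫ ≥ 0` is nonpositive, hence zero. A constraint
with `λᵢ > 0` and `gᵢ x < 0 = gᵢ x̄` would make its term strictly negative, so it is binding at `x`,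
and then the Lagrangian at `x` and at `x̄` both reduce to the common optimal value of `f`.
-/

open Set Filter Topology Finset

theorem eq_zero_of_nonneg_add_sum_of_nonpos {ι : Type*} {s : Finset ι} {a : ℝ} {b : ι → ℝ}
    (ha : a ≤ 0) (hb : ∀ i ∈ s, b i ≤ 0) (h : 0 ≤ a + ∑ i ∈ s, b i) : ∀ i ∈ s, b i = 0 :=
  (sum_eq_zero_iff_of_nonpos hb).1 (le_antisymm (sum_nonpos hb) (by linarith))

variable {E : Type*} [NormedAddCommGroup E] [InnerProductSpace ℝ E]

theorem inner_sub_neg_of_eventually_inner_sub_nonpos {d x y : E} (hd : d ≠ 0)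
    (h : ∀ᶠ z in 𝓝 y, inner ℝ d (z - x) ≤ 0) : inner ℝ d (y - x) < 0 := by
  have hpath : Tendsto (fun ε : ℝ => y + ε • d) (𝓝[>] 0) (𝓝 y) :=
    ((continuous_const.add (continuous_id.smul continuous_const)).tendsto' 0 y
      (by simp)).mono_left nhdsWithin_le_nhds
  obtain ⟨ε, hε, hεpos⟩ := ((hpath.eventually h).and self_mem_nhdsWithin).exists
  have hexpand : inner ℝ d (y + ε • d - x) = inner ℝ d (y - x) + ε * ‖d‖ ^ 2 := by
    rw [add_sub_right_comm, inner_add_right, real_inner_smul_right, real_inner_self_eq_norm_sq]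
  have : 0 < ε * ‖d‖ ^ 2 := mul_pos hεpos (by positivity)
  linarith

variable [CompleteSpace E]

theorem inner_gradient_sub_nonpos_of_forall_segment_le {h : E → ℝ} {x y : E}
    (hd : DifferentiableAt ℝ h x) (hle : ∀ z ∈ segment ℝ x y, h z ≤ h x) :
    inner ℝ (gradient h x) (y - x) ≤ 0 := by
  have hmax : IsLocalMaxOn h (segment ℝ x y) x := IsMaxOn.localize fun z hz => hle z hz
  rw [inner_gradient_left]
  exact hmax.hasFDerivWithinAt_nonpos hd.hasFDerivAt.hasFDerivWithinAt
    (sub_mem_posTangentConeAt_of_segment_subset subset_rfl)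

section Quasiconvex

variable {Γ : Set E} {h : E → ℝ}

theorem inner_gradient_sub_nonpos_of_quasiconvex
    (hqc : ∀ x ∈ Γ, ∀ y ∈ Γ, ∀ t ∈ Icc (0 : ℝ) 1, h (x + t • (y - x)) ≤ max (h x) (h y))
    {x y : E} (hx : x ∈ Γ) (hy : y ∈ Γ)
    (hd : DifferentiableAt ℝ h x) (hle : h y ≤ h x) : inner ℝ (gradient h x) (y - x) ≤ 0 :=
  inner_gradient_sub_nonpos_of_forall_segment_le hd <| by
    rw [segment_eq_image']
    rintro _ ⟨t, ht, rfl⟩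
    exact (hqc x hx y hy t ht).trans (max_eq_left hle).le

theorem inner_gradient_sub_neg_of_quasiconvex
    (hqc : ∀ x ∈ Γ, ∀ y ∈ Γ, ∀ t ∈ Icc (0 : ℝ) 1, h (x + t • (y - x)) ≤ max (h x) (h y))
    (hΓ : IsOpen Γ) {x y : E} (hx : x ∈ Γ) (hy : y ∈ Γ)
    (hd : DifferentiableAt ℝ h x) (hc : ContinuousAt h y) (hlt : h y < h x)
    (hne : gradient h x ≠ 0) : inner ℝ (gradient h x) (y - x) < 0 :=
  inner_sub_neg_of_eventually_inner_sub_nonpos hne <| by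
    filter_upwards [hΓ.mem_nhds hy, hc.eventually_lt_const hlt] with z hz hzlt
    exact inner_gradient_sub_nonpos_of_quasiconvex hqc hx hz hd hzlt.le

end Quasiconvex

theorem stmt_18_general {n m : ℕ} (Γ X : Set (EuclideanSpace ℝ (Fin n)))
    (hΓo : IsOpen Γ) (hXΓ : X ⊆ Γ)
    (f : EuclideanSpace ℝ (Fin n) → ℝ)
    (g : Fin m → EuclideanSpace ℝ (Fin n) → ℝ)
    (hfd : ∀ z ∈ Γ, DifferentiableAt ℝ f z)
    (hgd : ∀ i, ∀ z ∈ Γ, DifferentiableAt ℝ (g i) z)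
    (hfqc : ∀ x ∈ Γ, ∀ y ∈ Γ, ∀ t ∈ Set.Icc (0:ℝ) 1,
        f (x + t • (y - x)) ≤ max (f x) (f y))
    (hgqc : ∀ i, ∀ x ∈ Γ, ∀ y ∈ Γ, ∀ t ∈ Set.Icc (0:ℝ) 1,
        g i (x + t • (y - x)) ≤ max (g i x) (g i y))
    (S : Set (EuclideanSpace ℝ (Fin n)))
    (hSdef : S = {x ∈ X | ∀ i, g i x ≤ 0})
    (xb : EuclideanSpace ℝ (Fin n))
    (hxb : xb ∈ S ∧ ∀ y ∈ S, f xb ≤ f y)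
    (lam : Fin m → ℝ) (hlam : ∀ i, 0 ≤ lam i)
    (hKKT : ∀ x ∈ X,
      (inner ℝ (gradient f xb + ∑ i, lam i • gradient (g i) xb) (x - xb) : ℝ) ≥ 0)
    (hcompl : ∀ i, lam i * g i xb = 0)
    (hMFCQ : ∀ j, g j xb = 0 → 0 < lam j → gradient (g j) xb ≠ 0) :
    ∀ x ∈ S, (∀ y ∈ S, f x ≤ f y) →
      (∀ i, g i xb = 0 → 0 < lam i → g i x = 0) ∧
      f x + ∑ i, lam i * g i x = f xb + ∑ i, lam i * g i xb := by
  intro x hxS hxmin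
  subst hSdef
  obtain ⟨hxbS, hxbmin⟩ := hxb
  have hxbΓ : xb ∈ Γ := hXΓ hxbS.1
  obtain ⟨hxX, hxg⟩ := hxS
  have hxΓ : x ∈ Γ := hXΓ hxX
  have hfx : f x = f xb := le_antisymm (hxmin xb hxbS) (hxbmin x ⟨hxX, hxg⟩)
  have hact : ∀ i, 0 < lam i → g i xb = 0 := fun i hi =>
    (mul_eq_zero.1 (hcompl i)).resolve_left hi.ne'
  have hf_nonpos : inner ℝ (gradient f xb) (x - xb) ≤ 0 :=
    inner_gradient_sub_nonpos_of_quasiconvex hfqc hxbΓ hxΓ (hfd xb hxbΓ) hfx.le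
  have hg_nonpos : ∀ i, lam i * inner ℝ (gradient (g i) xb) (x - xb) ≤ 0 := by
    intro i
    rcases (hlam i).eq_or_lt with hi | hi
    · simp [← hi]
    · refine mul_nonpos_of_nonneg_of_nonpos hi.le
        (inner_gradient_sub_nonpos_of_quasiconvex (hgqc i) hxbΓ hxΓ (hgd i xb hxbΓ) ?_)
      rw [hact i hi]
      exact hxg i
  have hg_zero : ∀ i, lam i * inner ℝ (gradient (g i) xb) (x - xb) = 0 := by
    have hKKTx := hKKT x hxX
    simp only [inner_add_left, sum_inner, real_inner_smul_left] at hKKTx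
    exact fun i => eq_zero_of_nonneg_add_sum_of_nonpos hf_nonpos (fun i _ => hg_nonpos i)
      hKKTx i (mem_univ i)
  have hbinding : ∀ i, 0 < lam i → g i x = 0 := by
    intro i hi
    by_contra hne
    have hlt : g i x < g i xb := by rw [hact i hi]; exact (hxg i).lt_of_ne hne
    have hneg := inner_gradient_sub_neg_of_quasiconvex (hgqc i) hΓo hxbΓ hxΓ (hgd i xb hxbΓ)
      (hgd i x hxΓ).continuousAt hlt (hMFCQ i (hact i hi) hi)
    exact (mul_neg_of_pos_of_neg hi hneg).ne (hg_zero i)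
  have hcompl_x : ∀ i, lam i * g i x = 0 := fun i =>
    (hlam i).eq_or_lt.elim (fun hi => by simp [← hi]) (fun hi => by rw [hbinding i hi, mul_zero])
  refine ⟨fun i _ hi => hbinding i hi, ?_⟩
  simp [hcompl_x, hcompl, hfx]

theorem stmt_18 {n m : ℕ} (Γ X : Set (EuclideanSpace ℝ (Fin n)))
    (hΓo : IsOpen Γ) (hΓ : Convex ℝ Γ) (hX : Convex ℝ X) (hXΓ : X ⊆ Γ)
    (f : EuclideanSpace ℝ (Fin n) → ℝ)
    (g : Fin m → EuclideanSpace ℝ (Fin n) → ℝ)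
    (hfd : ∀ z ∈ Γ, DifferentiableAt ℝ f z)
    (hgd : ∀ i, ∀ z ∈ Γ, DifferentiableAt ℝ (g i) z)
    (hfqc : ∀ x ∈ Γ, ∀ y ∈ Γ, ∀ t ∈ Set.Icc (0:ℝ) 1,
        f (x + t • (y - x)) ≤ max (f x) (f y))
    (hgqc : ∀ i, ∀ x ∈ Γ, ∀ y ∈ Γ, ∀ t ∈ Set.Icc (0:ℝ) 1,
        g i (x + t • (y - x)) ≤ max (g i x) (g i y))
    (S : Set (EuclideanSpace ℝ (Fin n)))
    (hSdef : S = {x ∈ X | ∀ i, g i x ≤ 0})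
    (xb : EuclideanSpace ℝ (Fin n))
    (hxb : xb ∈ S ∧ ∀ y ∈ S, f xb ≤ f y)
    (lam : Fin m → ℝ) (hlam : ∀ i, 0 ≤ lam i)
    (hKKT : ∀ x ∈ X,
      (inner ℝ (gradient f xb + ∑ i, lam i • gradient (g i) xb) (x - xb) : ℝ) ≥ 0)
    (hcompl : ∀ i, lam i * g i xb = 0)
    (hMFCQ : ∀ j, g j xb = 0 → 0 < lam j → gradient (g j) xb ≠ 0) :
    ∀ x ∈ S, (∀ y ∈ S, f x ≤ f y) →
      (∀ i, g i xb = 0 → 0 < lam i → g i x = 0) ∧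
      f x + ∑ i, lam i * g i x = f xb + ∑ i, lam i * g i xb :=
  stmt_18_general Γ X hΓo hXΓ f g hfd hgd hfqc hgqc S hSdef xb hxb lam hlam hKKT hcompl hMFCQ
end
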